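/- arXiv:2010.02611 — 10 statements merged into one kernel-verified Lean document; each statement's English description precedes it below -/
import Mathlib

section
/- Let ξ: (g,⟨,⟩₁) → (h,⟨,⟩₂) be a Lie algebra homomorphism between metric Lie algebras with g unimodular. Then for every u ∈ h, ⟨τ(ξ), u⟩₂ = tr(ξ* ∘ ad_u ∘ ξ), where τ(ξ) = Σ_i B_{ξ(e_i)} ξ(e_i) for an orthonormal basis (e_i) of g, B is the Levi-Civita product of (h,⟨,⟩₂), and ξ* is the adjoint of ξ with respect to the two inner products. -/
open RealInnerProductSpace

lemma inner_apply_self_of_koszul {h : Type*} [NormedAddCommGroup h] [InnerProductSpace ℝ h]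
    {L : h →ₗ[ℝ] h →ₗ[ℝ] h} (hL_alt : ∀ u, L u u = 0) {B : h → h → h}
    (hB : ∀ u v w, 2 * ⟪B u v, w⟫ = ⟪L u v, w⟫ + ⟪L w u, v⟫ + ⟪L w v, u⟫) (u v : h) :
    ⟪B v v, u⟫ = ⟪L u v, v⟫ := by
  have koszul := hB v v u
  rw [hL_alt v, inner_zero_left] at koszul
  linarith

theorem tension_field_inner_eq_trace_general
    {g h : Type*} [NormedAddCommGroup g] [InnerProductSpace ℝ g] [FiniteDimensional ℝ g]
    [NormedAddCommGroup h] [InnerProductSpace ℝ h] [FiniteDimensional ℝ h]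
    (Lh : h →ₗ[ℝ] h →ₗ[ℝ] h)
    (hLh_alt : ∀ u, Lh u u = 0)
    (ξ : g →ₗ[ℝ] h)
    (B : h → h → h)
    (hB : ∀ u v w, 2 * ⟪B u v, w⟫ = ⟪Lh u v, w⟫ + ⟪Lh w u, v⟫ + ⟪Lh w v, u⟫)
    {ι : Type*} [Fintype ι] (e : OrthonormalBasis ι ℝ g) :
    ∀ u : h, ⟪∑ i, B (ξ (e i)) (ξ (e i)), u⟫ =
      LinearMap.trace ℝ g (LinearMap.adjoint ξ ∘ₗ Lh u ∘ₗ ξ) := by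
  intro u
  rw [LinearMap.trace_eq_sum_inner _ e, sum_inner]
  refine Fintype.sum_congr _ _ fun i => ?_
  rw [inner_apply_self_of_koszul hLh_alt hB, LinearMap.comp_apply, LinearMap.comp_apply,
    LinearMap.adjoint_inner_right, real_inner_comm]

/-- For a Lie algebra homomorphism `ξ` between metric Lie algebras with unimodular source,
`⟨τ(ξ), u⟩₂ = tr(ξ* ∘ ad_u ∘ ξ)`, where `τ(ξ) = Σ_i B_{ξ(e_i)} ξ(e_i)`. -/
theorem tension_field_inner_eq_trace
    {g h : Type*} [NormedAddCommGroup g] [InnerProductSpace ℝ g] [FiniteDimensional ℝ g]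
    [NormedAddCommGroup h] [InnerProductSpace ℝ h] [FiniteDimensional ℝ h]
    (Lg : g →ₗ[ℝ] g →ₗ[ℝ] g) (Lh : h →ₗ[ℝ] h →ₗ[ℝ] h)
    (hLg_alt : ∀ u, Lg u u = 0)
    (hLg_jacobi : ∀ u v w, Lg u (Lg v w) + Lg v (Lg w u) + Lg w (Lg u v) = 0)
    (hLh_alt : ∀ u, Lh u u = 0)
    (hLh_jacobi : ∀ u v w, Lh u (Lh v w) + Lh v (Lh w u) + Lh w (Lh u v) = 0)
    (hg_unimodular : ∀ v, LinearMap.trace ℝ g (Lg v) = 0)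
    (ξ : g →ₗ[ℝ] h)
    (hξ : ∀ u v, ξ (Lg u v) = Lh (ξ u) (ξ v))
    (B : h → h → h)
    (hB : ∀ u v w, 2 * ⟪B u v, w⟫ = ⟪Lh u v, w⟫ + ⟪Lh w u, v⟫ + ⟪Lh w v, u⟫)
    {ι : Type*} [Fintype ι] (e : OrthonormalBasis ι ℝ g) :
    ∀ u : h, ⟪∑ i, B (ξ (e i)) (ξ (e i)), u⟫ =
      LinearMap.trace ℝ g (LinearMap.adjoint ξ ∘ₗ Lh u ∘ₗ ξ) :=
  tension_field_inner_eq_trace_general Lh hLh_alt ξ B hB e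
end

section
/- Let n be the 3-dimensional Heisenberg Lie algebra with basis (X₁,X₂,X₃) and [X₁,X₂]=X₃, endowed with source metric diag(λ₁,λ₁,1) and target metric diag(λ₂,λ₂,1) in this basis (λ₁,λ₂>0). For the homomorphism ξ with matrix columns (α₁,β₁,α₃), (α₂,β₂,β₃), (0,0,α₁β₂−α₂β₁), the tension field equals τ(ξ) = ((α₃β₁+β₃β₂)/(λ₁λ₂)) X₁ − ((α₃α₁+β₃α₂)/(λ₁λ₂)) X₂. -/
/-!
The Koszul identity pins down the Levi-Civita product of a nondegenerate metric: pairing it with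
`X₁, X₂, X₃` gives its three coordinates. For the metric `diag(λ, λ, 1)` on the Heisenberg
algebra this yields `B_u u = (u₂u₃/λ) X₁ − (u₁u₃/λ) X₂`, with no `X₃`-component. Hence
`ξ(X₃)` (which is central) contributes nothing to `τ(ξ)`, while `ξ(X₁/√λ₁)` and `ξ(X₂/√λ₁)`
contribute `1/λ₁` times the value of this quadratic form on the first two columns of `ξ`.
-/

noncomputable section

/-- Diagonal inner product on `ℝ³` with diagonal `d`. -/
def ip (d : Fin 3 → ℝ) (u v : Fin 3 → ℝ) : ℝ :=
  d 0 * u 0 * v 0 + d 1 * u 1 * v 1 + d 2 * u 2 * v 2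

/-- The Heisenberg bracket: `[X₁,X₂] = X₃`. -/
def brN (u v : Fin 3 → ℝ) : Fin 3 → ℝ :=
  ![0, 0, u 0 * v 1 - u 1 * v 0]

def heisenbergLeviCivita (l : ℝ) (u v : Fin 3 → ℝ) : Fin 3 → ℝ :=
  ![(u 1 * v 2 + v 1 * u 2) / (2 * l), -((u 0 * v 2 + v 0 * u 2) / (2 * l)),
    (u 0 * v 1 - u 1 * v 0) / 2]

theorem eq_heisenbergLeviCivita_of_koszul {l : ℝ} (hl : l ≠ 0)
    {B : (Fin 3 → ℝ) → (Fin 3 → ℝ) → (Fin 3 → ℝ)}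
    (hB : ∀ u v w, 2 * ip ![l, l, 1] (B u v) w =
      ip ![l, l, 1] (brN u v) w + ip ![l, l, 1] (brN w u) v + ip ![l, l, 1] (brN w v) u) :
    B = heisenbergLeviCivita l := by
  funext u v i
  have hkoszul := hB u v (Pi.single i 1)
  fin_cases i <;> simp [ip, brN, heisenbergLeviCivita] at hkoszul ⊢ <;> field_simp <;> linarith

theorem heisenbergLeviCivita_self (l : ℝ) (u : Fin 3 → ℝ) :
    heisenbergLeviCivita l u u = ![u 1 * u 2 / l, -(u 0 * u 2 / l), 0] := by
  ext i
  fin_cases i <;> simp [heisenbergLeviCivita] <;> ring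

/-- For the Heisenberg algebra with metrics `diag(λ₁,λ₁,1)` and `diag(λ₂,λ₂,1)` and
the homomorphism with matrix rows `(α₁,α₂,0),(β₁,β₂,0),(α₃,β₃,α₁β₂−α₂β₁)`,
`τ(ξ) = ((α₃β₁+β₃β₂)/(λ₁λ₂)) X₁ − ((α₃α₁+β₃α₂)/(λ₁λ₂)) X₂`. -/
theorem heisenberg_tension_field
    (l1 l2 : ℝ) (hl1 : 0 < l1) (hl2 : 0 < l2)
    (α1 α2 α3 β1 β2 β3 : ℝ)
    (ξ : (Fin 3 → ℝ) → (Fin 3 → ℝ))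
    (hξ : ξ = fun u => ![α1 * u 0 + α2 * u 1, β1 * u 0 + β2 * u 1,
      α3 * u 0 + β3 * u 1 + (α1 * β2 - α2 * β1) * u 2])
    (B : (Fin 3 → ℝ) → (Fin 3 → ℝ) → (Fin 3 → ℝ))
    -- B is the Levi-Civita product of the target metric diag(λ₂,λ₂,1)
    (hB : ∀ u v w, 2 * ip ![l2, l2, 1] (B u v) w =
      ip ![l2, l2, 1] (brN u v) w + ip ![l2, l2, 1] (brN w u) v + ip ![l2, l2, 1] (brN w v) u)
    (τ : Fin 3 → ℝ)
    -- τ(ξ) = Σ_i B_{ξ(e_i)} ξ(e_i) for the orthonormal basis of diag(λ₁,λ₁,1)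
    (hτ : τ = B (ξ ![Real.sqrt (1/l1), 0, 0]) (ξ ![Real.sqrt (1/l1), 0, 0])
            + B (ξ ![0, Real.sqrt (1/l1), 0]) (ξ ![0, Real.sqrt (1/l1), 0])
            + B (ξ ![0, 0, 1]) (ξ ![0, 0, 1])) :
    τ = ![(α3 * β1 + β3 * β2) / (l1 * l2), -((α3 * α1 + β3 * α2) / (l1 * l2)), 0] := by
  have hs : Real.sqrt (1 / l1) ^ 2 = 1 / l1 := Real.sq_sqrt (by positivity)
  generalize Real.sqrt (1 / l1) = s at hs hτ
  subst hξ hτ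
  rw [eq_heisenbergLeviCivita_of_koszul hl2.ne' hB]
  ext i
  fin_cases i <;> simp [heisenbergLeviCivita_self]
  · linear_combination (α3 * β1 + β3 * β2) / l2 * hs
  · linear_combination -(α3 * α1 + β3 * α2) / l2 * hs
end
end

section
/- Let e₀(2) be the Lie algebra with basis (X₁,X₂,X₃) and brackets [X₃,X₁]=X₂, [X₃,X₂]=−X₁, with source metric diag(1,μ₁,ν₁) and target metric diag(1,μ₂,ν₂). The homomorphism ξ mapping X₁↦αX₁+βX₂, X₂↦−βX₁+αX₂, X₃↦aX₁+bX₂+X₃ has tension field τ(ξ) = −(μ₂b/ν₁)X₁ + (a/(μ₂ν₁))X₂ + ((μ₂−1)(αβν₁(μ₁−1)+abμ₁)/(μ₁ν₁ν₂))X₃. -/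
/-!
A diagonal metric is nondegenerate, so the Koszul formula determines the Levi-Civita product
uniquely; solving it for `diag(1, μ₂, ν₂)` gives, for `u = Σ uᵢXᵢ`,
`B_u u = -μ₂u₂u₃ X₁ + (u₁u₃/μ₂) X₂ + ((μ₂ - 1)u₁u₂/ν₂) X₃`.
The tension field is the sum of this quadratic form over `ξ(X₁)`, `μ₁^(-1/2) ξ(X₂)` and
`ν₁^(-1/2) ξ(X₃)`, in which only the squares `1/μ₁`, `1/ν₁` of the normalising factors appear.
-/

noncomputable section

/-- The bracket of `e₀(2)`: `[X₃,X₁] = X₂`, `[X₃,X₂] = −X₁`. -/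
def brE (u v : Fin 3 → ℝ) : Fin 3 → ℝ :=
  ![u 1 * v 2 - u 2 * v 1, u 2 * v 0 - u 0 * v 2, 0]

lemma ip_single_right (d u : Fin 3 → ℝ) (i : Fin 3) : ip d u (Pi.single i 1) = d i * u i := by
  fin_cases i <;> simp [ip]

lemma eq_of_forall_ip_eq {d x y : Fin 3 → ℝ} (hd : ∀ i, d i ≠ 0)
    (h : ∀ w, ip d x w = ip d y w) : x = y := by
  ext i
  have := h (Pi.single i 1)
  rw [ip_single_right, ip_single_right] at this
  exact mul_left_cancel₀ (hd i) this

/-- The Levi-Civita product of `e₀(2)` for the metric `diag(1, μ, ν)`. -/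
def leviCivitaE02 (μ ν : ℝ) (u v : Fin 3 → ℝ) : Fin 3 → ℝ :=
  ![(u 1 * v 2 - u 2 * v 1 - μ * u 2 * v 1 - μ * v 2 * u 1) / 2,
    (μ * (u 2 * v 0 - u 0 * v 2) + u 2 * v 0 + v 2 * u 0) / (2 * μ),
    (μ - 1) * (u 0 * v 1 + u 1 * v 0) / (2 * ν)]

section

variable {μ ν : ℝ} (hμ : μ ≠ 0) (hν : ν ≠ 0)
include hμ hν

lemma two_mul_ip_leviCivitaE02 (u v w : Fin 3 → ℝ) :
    2 * ip ![1, μ, ν] (leviCivitaE02 μ ν u v) w =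
      ip ![1, μ, ν] (brE u v) w + ip ![1, μ, ν] (brE w u) v + ip ![1, μ, ν] (brE w v) u := by
  simp only [ip, brE, leviCivitaE02, Fin.isValue, Matrix.cons_val_zero, Matrix.cons_val_one,
    Matrix.cons_val, mul_zero, zero_mul, add_zero]
  field_simp
  ring

lemma eq_leviCivitaE02_of_koszul {B : (Fin 3 → ℝ) → (Fin 3 → ℝ) → (Fin 3 → ℝ)}
    (hB : ∀ u v w, 2 * ip ![1, μ, ν] (B u v) w =
      ip ![1, μ, ν] (brE u v) w + ip ![1, μ, ν] (brE w u) v + ip ![1, μ, ν] (brE w v) u) :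
    B = leviCivitaE02 μ ν := by
  funext u v
  refine eq_of_forall_ip_eq (d := ![1, μ, ν]) (fun i => ?_) fun w => ?_
  · fin_cases i <;> simp [hμ, hν]
  · have := hB u v w
    rw [← two_mul_ip_leviCivitaE02 hμ hν] at this
    linarith

end

lemma leviCivitaE02_self (μ ν : ℝ) (hμ : μ ≠ 0) (u : Fin 3 → ℝ) :
    leviCivitaE02 μ ν u u = ![-(μ * u 1 * u 2), u 0 * u 2 / μ, (μ - 1) * u 0 * u 1 / ν] := by
  simp only [leviCivitaE02, Matrix.vecCons_inj, and_true]
  refine ⟨by ring, by field_simp; ring, by ring⟩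

theorem e02_tension_field_general
    (μ1 μ2 ν1 ν2 : ℝ) (hμ1 : 0 < μ1) (hμ2 : 0 < μ2)
    (hν1 : 0 < ν1) (hν2 : 0 < ν2)
    (α β a b : ℝ)
    (ξ : (Fin 3 → ℝ) → (Fin 3 → ℝ))
    (hξ : ξ = fun u => ![α * u 0 - β * u 1 + a * u 2, β * u 0 + α * u 1 + b * u 2, u 2])
    (B : (Fin 3 → ℝ) → (Fin 3 → ℝ) → (Fin 3 → ℝ))
    -- B is the Levi-Civita product of the target metric diag(1,μ₂,ν₂)
    (hB : ∀ u v w, 2 * ip ![1, μ2, ν2] (B u v) w =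
      ip ![1, μ2, ν2] (brE u v) w + ip ![1, μ2, ν2] (brE w u) v + ip ![1, μ2, ν2] (brE w v) u)
    (τ : Fin 3 → ℝ)
    -- τ(ξ) = Σ_i B_{ξ(e_i)} ξ(e_i) for the orthonormal basis of diag(1,μ₁,ν₁)
    (hτ : τ = B (ξ ![1, 0, 0]) (ξ ![1, 0, 0])
            + B (ξ ![0, Real.sqrt (1/μ1), 0]) (ξ ![0, Real.sqrt (1/μ1), 0])
            + B (ξ ![0, 0, Real.sqrt (1/ν1)]) (ξ ![0, 0, Real.sqrt (1/ν1)])) :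
    τ = ![-(μ2 * b / ν1), a / (μ2 * ν1),
          (μ2 - 1) * (α * β * ν1 * (μ1 - 1) + a * b * μ1) / (μ1 * ν1 * ν2)] := by
  obtain rfl := eq_leviCivitaE02_of_koszul hμ2.ne' hν2.ne' hB
  subst hξ hτ
  have hs : μ1 * √(1 / μ1) ^ 2 = 1 := by rw [Real.sq_sqrt (by positivity)]; field_simp
  have ht : ν1 * √(1 / ν1) ^ 2 = 1 := by rw [Real.sq_sqrt (by positivity)]; field_simp
  simp only [leviCivitaE02_self μ2 ν2 hμ2.ne', Matrix.cons_val_zero, Matrix.cons_val_one,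
    Matrix.cons_val_two, Matrix.add_cons, Matrix.head_cons, Matrix.tail_cons, Matrix.empty_add_empty,
    Matrix.vecCons_inj, and_true]
  refine ⟨?_, ?_, ?_⟩ <;> field_simp
  · linear_combination -b * ht
  · linear_combination a * ht
  · linear_combination (μ2 - 1) * (μ1 * a * b * ht - ν1 * α * β * hs)

/-- For `e₀(2)` with metrics `diag(1,μ₁,ν₁)` and `diag(1,μ₂,ν₂)`, the homomorphism
`X₁↦αX₁+βX₂, X₂↦−βX₁+αX₂, X₃↦aX₁+bX₂+X₃` has tension field
`τ(ξ) = −(μ₂b/ν₁)X₁ + (a/(μ₂ν₁))X₂ + ((μ₂−1)(αβν₁(μ₁−1)+abμ₁)/(μ₁ν₁ν₂))X₃`. -/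
theorem e02_tension_field
    (μ1 μ2 ν1 ν2 : ℝ) (hμ1 : 0 < μ1) (hμ1' : μ1 ≤ 1) (hμ2 : 0 < μ2) (hμ2' : μ2 ≤ 1)
    (hν1 : 0 < ν1) (hν2 : 0 < ν2)
    (α β a b : ℝ)
    (ξ : (Fin 3 → ℝ) → (Fin 3 → ℝ))
    (hξ : ξ = fun u => ![α * u 0 - β * u 1 + a * u 2, β * u 0 + α * u 1 + b * u 2, u 2])
    (B : (Fin 3 → ℝ) → (Fin 3 → ℝ) → (Fin 3 → ℝ))
    -- B is the Levi-Civita product of the target metric diag(1,μ₂,ν₂)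
    (hB : ∀ u v w, 2 * ip ![1, μ2, ν2] (B u v) w =
      ip ![1, μ2, ν2] (brE u v) w + ip ![1, μ2, ν2] (brE w u) v + ip ![1, μ2, ν2] (brE w v) u)
    (τ : Fin 3 → ℝ)
    -- τ(ξ) = Σ_i B_{ξ(e_i)} ξ(e_i) for the orthonormal basis of diag(1,μ₁,ν₁)
    (hτ : τ = B (ξ ![1, 0, 0]) (ξ ![1, 0, 0])
            + B (ξ ![0, Real.sqrt (1/μ1), 0]) (ξ ![0, Real.sqrt (1/μ1), 0])
            + B (ξ ![0, 0, Real.sqrt (1/ν1)]) (ξ ![0, 0, Real.sqrt (1/ν1)])) :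
    τ = ![-(μ2 * b / ν1), a / (μ2 * ν1),
          (μ2 - 1) * (α * β * ν1 * (μ1 - 1) + a * b * μ1) / (μ1 * ν1 * ν2)] :=
  e02_tension_field_general μ1 μ2 ν1 ν2 hμ1 hμ2 hν1 hν2 α β a b ξ hξ B hB τ hτ
end
end

section
/- Let e₀(2) carry source metric diag(1,μ₁,ν₁) and target metric diag(1,μ₂,ν₂) (0<μᵢ≤1, νᵢ>0), and let ξ be the homomorphism X₁↦0, X₂↦0, X₃↦aX₁+bX₂ (γ=0). Then the bitension field satisfies τ₂(ξ) = (a−b)(a+b)(μ₂−1)² a b/(ν₁²ν₂²) · X₃, and hence ξ is biharmonic but not harmonic if and only if a² = b², ab ≠ 0, and μ₂ ≠ 1. -/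
/-!
Koszul's formula determines the Levi-Civita product of `diag(1,μ,ν)` on `e₀(2)` explicitly.
The map `ξ` kills the first two orthonormal vectors of the source and sends the third to the
horizontal vector `w = √(1/ν₁)(a,b,0)`, so `τ(ξ) = B_w w` is vertical and `τ₂(ξ)` reduces to the
single vertical term `-(B_w B_w τ + K(τ,w)w)`. The criterion is then read off the factorization of
its coefficient.
-/

noncomputable section

def leviCivitaE (μ ν : ℝ) (u v : Fin 3 → ℝ) : Fin 3 → ℝ :=
  ![((1 - μ) * u 1 * v 2 - (1 + μ) * u 2 * v 1) / 2,
    ((1 + μ) * u 2 * v 0 + (1 - μ) * u 0 * v 2) / (2 * μ),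
    (μ - 1) * (u 0 * v 1 + u 1 * v 0) / (2 * ν)]

theorem eq_leviCivitaE_of_koszul {μ ν : ℝ} (hμ : μ ≠ 0) (hν : ν ≠ 0)
    {B : (Fin 3 → ℝ) → (Fin 3 → ℝ) → (Fin 3 → ℝ)}
    (hB : ∀ u v w, 2 * ip ![1, μ, ν] (B u v) w =
      ip ![1, μ, ν] (brE u v) w + ip ![1, μ, ν] (brE w u) v + ip ![1, μ, ν] (brE w v) u) :
    B = leviCivitaE μ ν := by
  funext u v i
  have h₀ := hB u v ![1, 0, 0]
  have h₁ := hB u v ![0, 1, 0]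
  have h₂ := hB u v ![0, 0, 1]
  simp only [ip, brE, Matrix.cons_val] at h₀ h₁ h₂
  fin_cases i <;> simp [leviCivitaE] <;> field_simp <;> linarith

@[simp]
theorem leviCivitaE_zero_left (μ ν : ℝ) (v : Fin 3 → ℝ) : leviCivitaE μ ν 0 v = 0 := by
  funext i; fin_cases i <;> simp [leviCivitaE]

@[simp]
theorem leviCivitaE_zero_right (μ ν : ℝ) (u : Fin 3 → ℝ) : leviCivitaE μ ν u 0 = 0 := by
  funext i; fin_cases i <;> simp [leviCivitaE]

theorem leviCivitaE_horizontal_self (μ ν p q : ℝ) :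
    leviCivitaE μ ν ![p, q, 0] ![p, q, 0] = ![0, 0, (μ - 1) * p * q / ν] := by
  funext i; fin_cases i <;> simp [leviCivitaE]; ring

theorem neg_leviCivitaE_bitension {μ : ℝ} (hμ : μ ≠ 0) (ν p q t : ℝ) :
    -(leviCivitaE μ ν ![p, q, 0] (leviCivitaE μ ν ![p, q, 0] ![0, 0, t]) +
        (leviCivitaE μ ν ![0, 0, t] (leviCivitaE μ ν ![p, q, 0] ![p, q, 0]) -
          leviCivitaE μ ν ![p, q, 0] (leviCivitaE μ ν ![0, 0, t] ![p, q, 0]) -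
          leviCivitaE μ ν (brE ![0, 0, t] ![p, q, 0]) ![p, q, 0])) =
      ![0, 0, (μ - 1) * (p ^ 2 - q ^ 2) * t / ν] := by
  funext i; fin_cases i <;> simp [leviCivitaE, brE]
  field_simp
  ring

theorem biharmonic_not_harmonic_coeff_iff {a b μ c d : ℝ} (hc : c ≠ 0) (hd : d ≠ 0) :
    ((a - b) * (a + b) * (μ - 1) ^ 2 * a * b / c = 0 ∧ (μ - 1) * a * b / d ≠ 0) ↔
      (a ^ 2 = b ^ 2 ∧ a * b ≠ 0 ∧ μ ≠ 1) := by
  rw [sq_eq_sq_iff_eq_or_eq_neg]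
  simp [hc, hd, sub_eq_zero, add_eq_zero_iff_eq_neg]
  tauto

theorem e02_biharmonic_not_harmonic_general
    (μ1 μ2 ν1 ν2 : ℝ) (hμ2 : 0 < μ2)
    (hν1 : 0 < ν1) (hν2 : 0 < ν2)
    (a b : ℝ)
    (ξ : (Fin 3 → ℝ) → (Fin 3 → ℝ))
    (hξ : ξ = fun u => ![a * u 2, b * u 2, 0])
    (B : (Fin 3 → ℝ) → (Fin 3 → ℝ) → (Fin 3 → ℝ))
    -- B is the Levi-Civita product of the target metric diag(1,μ₂,ν₂)
    (hB : ∀ u v w, 2 * ip ![1, μ2, ν2] (B u v) w =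
      ip ![1, μ2, ν2] (brE u v) w + ip ![1, μ2, ν2] (brE w u) v + ip ![1, μ2, ν2] (brE w v) u)
    -- K is the curvature of the target: K(u,v)w = B_u B_v w − B_v B_u w − B_{[u,v]} w
    (K : (Fin 3 → ℝ) → (Fin 3 → ℝ) → (Fin 3 → ℝ) → (Fin 3 → ℝ))
    (hK : ∀ u v w, K u v w = B u (B v w) - B v (B u w) - B (brE u v) w)
    (τ τ₂ : Fin 3 → ℝ)
    -- τ(ξ) = Σ_i B_{ξ(e_i)} ξ(e_i) for the orthonormal basis e of diag(1,μ₁,ν₁)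
    (hτ : τ = B (ξ ![1, 0, 0]) (ξ ![1, 0, 0])
            + B (ξ ![0, Real.sqrt (1/μ1), 0]) (ξ ![0, Real.sqrt (1/μ1), 0])
            + B (ξ ![0, 0, Real.sqrt (1/ν1)]) (ξ ![0, 0, Real.sqrt (1/ν1)]))
    -- τ₂(ξ) = −Σ_i (B_{ξ(e_i)} B_{ξ(e_i)} τ(ξ) + K(τ(ξ),ξ(e_i))ξ(e_i))
    (hτ₂ : τ₂ = -(B (ξ ![1, 0, 0]) (B (ξ ![1, 0, 0]) τ) + K τ (ξ ![1, 0, 0]) (ξ ![1, 0, 0])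
      + B (ξ ![0, Real.sqrt (1/μ1), 0]) (B (ξ ![0, Real.sqrt (1/μ1), 0]) τ)
        + K τ (ξ ![0, Real.sqrt (1/μ1), 0]) (ξ ![0, Real.sqrt (1/μ1), 0])
      + B (ξ ![0, 0, Real.sqrt (1/ν1)]) (B (ξ ![0, 0, Real.sqrt (1/ν1)]) τ)
        + K τ (ξ ![0, 0, Real.sqrt (1/ν1)]) (ξ ![0, 0, Real.sqrt (1/ν1)]))) :
    τ₂ = ![0, 0, (a - b) * (a + b) * (μ2 - 1)^2 * a * b / (ν1^2 * ν2^2)] ∧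
      ((τ₂ = 0 ∧ τ ≠ 0) ↔ (a^2 = b^2 ∧ a * b ≠ 0 ∧ μ2 ≠ 1)) := by
  obtain rfl : B = leviCivitaE μ2 ν2 := eq_leviCivitaE_of_koszul hμ2.ne' hν2.ne' hB
  set s := Real.sqrt (1 / ν1)
  have hs : s ^ 2 = 1 / ν1 := Real.sq_sqrt (by positivity)
  have hξ₁ : ξ ![1, 0, 0] = 0 := by simp [hξ]
  have hξ₂ : ξ ![0, Real.sqrt (1 / μ1), 0] = 0 := by simp [hξ]
  have hξ₃ : ξ ![0, 0, s] = ![a * s, b * s, 0] := by simp [hξ]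
  have hτ' : τ = ![0, 0, (μ2 - 1) * a * b / (ν1 * ν2)] := by
    rw [hτ, hξ₁, hξ₂, hξ₃, leviCivitaE_zero_left, leviCivitaE_horizontal_self, zero_add, zero_add]
    congr 3
    linear_combination (μ2 - 1) * a * b / ν2 * hs
  have hτ₂' : τ₂ = ![0, 0, (a - b) * (a + b) * (μ2 - 1)^2 * a * b / (ν1^2 * ν2^2)] := by
    simp only [hτ₂, hK, hξ₁, hξ₂, hξ₃, leviCivitaE_zero_left, leviCivitaE_zero_right, sub_zero,
      zero_add]
    rw [hτ', neg_leviCivitaE_bitension hμ2.ne']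
    congr 3
    linear_combination (μ2 - 1) ^ 2 * a * b * (a ^ 2 - b ^ 2) / (ν1 * ν2 ^ 2) * hs
  refine ⟨hτ₂', ?_⟩
  simpa [hτ', hτ₂'] using biharmonic_not_harmonic_coeff_iff (a := a) (b := b) (μ := μ2)
    (by positivity : ν1 ^ 2 * ν2 ^ 2 ≠ 0) (by positivity : ν1 * ν2 ≠ 0)

/-- For `e₀(2)` with metrics `diag(1,μ₁,ν₁)`, `diag(1,μ₂,ν₂)` and the homomorphism
`X₁↦0, X₂↦0, X₃↦aX₁+bX₂`, one has
`τ₂(ξ) = (a−b)(a+b)(μ₂−1)²ab/(ν₁²ν₂²) X₃`, so `ξ` is biharmonic but not harmonic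
iff `a² = b²`, `ab ≠ 0` and `μ₂ ≠ 1`. -/
theorem e02_biharmonic_not_harmonic
    (μ1 μ2 ν1 ν2 : ℝ) (hμ1 : 0 < μ1) (hμ1' : μ1 ≤ 1) (hμ2 : 0 < μ2) (hμ2' : μ2 ≤ 1)
    (hν1 : 0 < ν1) (hν2 : 0 < ν2)
    (a b : ℝ)
    (ξ : (Fin 3 → ℝ) → (Fin 3 → ℝ))
    (hξ : ξ = fun u => ![a * u 2, b * u 2, 0])
    (B : (Fin 3 → ℝ) → (Fin 3 → ℝ) → (Fin 3 → ℝ))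
    -- B is the Levi-Civita product of the target metric diag(1,μ₂,ν₂)
    (hB : ∀ u v w, 2 * ip ![1, μ2, ν2] (B u v) w =
      ip ![1, μ2, ν2] (brE u v) w + ip ![1, μ2, ν2] (brE w u) v + ip ![1, μ2, ν2] (brE w v) u)
    -- K is the curvature of the target: K(u,v)w = B_u B_v w − B_v B_u w − B_{[u,v]} w
    (K : (Fin 3 → ℝ) → (Fin 3 → ℝ) → (Fin 3 → ℝ) → (Fin 3 → ℝ))
    (hK : ∀ u v w, K u v w = B u (B v w) - B v (B u w) - B (brE u v) w)
    (τ τ₂ : Fin 3 → ℝ)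
    -- τ(ξ) = Σ_i B_{ξ(e_i)} ξ(e_i) for the orthonormal basis e of diag(1,μ₁,ν₁)
    (hτ : τ = B (ξ ![1, 0, 0]) (ξ ![1, 0, 0])
            + B (ξ ![0, Real.sqrt (1/μ1), 0]) (ξ ![0, Real.sqrt (1/μ1), 0])
            + B (ξ ![0, 0, Real.sqrt (1/ν1)]) (ξ ![0, 0, Real.sqrt (1/ν1)]))
    -- τ₂(ξ) = −Σ_i (B_{ξ(e_i)} B_{ξ(e_i)} τ(ξ) + K(τ(ξ),ξ(e_i))ξ(e_i))
    (hτ₂ : τ₂ = -(B (ξ ![1, 0, 0]) (B (ξ ![1, 0, 0]) τ) + K τ (ξ ![1, 0, 0]) (ξ ![1, 0, 0])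
      + B (ξ ![0, Real.sqrt (1/μ1), 0]) (B (ξ ![0, Real.sqrt (1/μ1), 0]) τ)
        + K τ (ξ ![0, Real.sqrt (1/μ1), 0]) (ξ ![0, Real.sqrt (1/μ1), 0])
      + B (ξ ![0, 0, Real.sqrt (1/ν1)]) (B (ξ ![0, 0, Real.sqrt (1/ν1)]) τ)
        + K τ (ξ ![0, 0, Real.sqrt (1/ν1)]) (ξ ![0, 0, Real.sqrt (1/ν1)]))) :
    τ₂ = ![0, 0, (a - b) * (a + b) * (μ2 - 1)^2 * a * b / (ν1^2 * ν2^2)] ∧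
      ((τ₂ = 0 ∧ τ ≠ 0) ↔ (a^2 = b^2 ∧ a * b ≠ 0 ∧ μ2 ≠ 1)) :=
  e02_biharmonic_not_harmonic_general μ1 μ2 ν1 ν2 hμ2 hν1 hν2 a b ξ hξ B hB K hK τ τ₂ hτ hτ₂
end
end

section
/- Let sol be the Lie algebra with basis (X₁,X₂,X₃) and brackets [X₃,X₁]=X₁, [X₃,X₂]=−X₂, with both metrics of the form diag(1,1,νᵢ), νᵢ>0. For the homomorphism ξ sending X₁↦0, X₂↦0, X₃↦aX₁+bX₂+γX₃, one has τ(ξ) = −(γa/ν₁)X₁ + (γb/ν₁)X₂ + ((a²−b²)/(ν₁ν₂))X₃; hence ξ is harmonic if and only if (a=b=0) or (γ=0 and a²=b²). -/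
noncomputable section

/-- The bracket of `sol`: `[X₃,X₁] = X₁`, `[X₃,X₂] = −X₂`. -/
def brS (u v : Fin 3 → ℝ) : Fin 3 → ℝ :=
  ![u 2 * v 0 - u 0 * v 2, u 1 * v 2 - u 2 * v 1, 0]

/-! The Levi-Civita product of `sol` with the metric `diag(1,1,ν)` is read off from the Koszul
formula; it is bilinear, so `τ(ξ) = (1/ν₁) B_x x` with `x = ξ(X₃) = (a, b, γ)`, and the
harmonicity condition `γa = γb = a² − b² = 0` is elementary. -/

theorem ip_left_injective {d : Fin 3 → ℝ} (hd : ∀ i, d i ≠ 0) {x y : Fin 3 → ℝ}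
    (h : ∀ w, ip d x w = ip d y w) : x = y := by
  funext i
  have hi := h (Pi.single i 1)
  fin_cases i <;> simpa [ip, hd] using hi

def solLeviCivita (ν : ℝ) (u v : Fin 3 → ℝ) : Fin 3 → ℝ :=
  ![-(u 0 * v 2), u 1 * v 2, (u 0 * v 0 - u 1 * v 1) / ν]

theorem two_mul_ip_solLeviCivita {ν : ℝ} (hν : ν ≠ 0) (u v w : Fin 3 → ℝ) :
    2 * ip ![1, 1, ν] (solLeviCivita ν u v) w =
      ip ![1, 1, ν] (brS u v) w + ip ![1, 1, ν] (brS w u) v + ip ![1, 1, ν] (brS w v) u := by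
  simp only [ip, brS, solLeviCivita, Matrix.cons_val_zero, Matrix.cons_val_one,
    Matrix.cons_val_two, Matrix.head_cons, Matrix.tail_cons]
  field_simp
  ring

theorem eq_solLeviCivita_of_koszul {ν : ℝ} (hν : ν ≠ 0)
    {B : (Fin 3 → ℝ) → (Fin 3 → ℝ) → (Fin 3 → ℝ)}
    (hB : ∀ u v w, 2 * ip ![1, 1, ν] (B u v) w =
      ip ![1, 1, ν] (brS u v) w + ip ![1, 1, ν] (brS w u) v + ip ![1, 1, ν] (brS w v) u) :
    B = solLeviCivita ν := by
  funext u v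
  refine ip_left_injective (d := ![1, 1, ν]) ?_ fun w => ?_
  · intro i
    fin_cases i <;> simp [hν]
  · have h := hB u v w
    rw [← two_mul_ip_solLeviCivita hν] at h
    linarith

theorem solLeviCivita_zero_zero (ν : ℝ) : solLeviCivita ν 0 0 = 0 := by
  funext i
  fin_cases i <;> simp [solLeviCivita]

theorem solLeviCivita_smul_smul (ν s : ℝ) (u v : Fin 3 → ℝ) :
    solLeviCivita ν (s • u) (s • v) = s ^ 2 • solLeviCivita ν u v := by
  simp only [solLeviCivita, Matrix.smul_vec3, Pi.smul_apply, smul_eq_mul]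
  exact Matrix.vec3_eq (by ring) (by ring) (by ring)

theorem solLeviCivita_self (ν a b γ : ℝ) :
    solLeviCivita ν ![a, b, γ] ![a, b, γ] = ![-(γ * a), γ * b, (a ^ 2 - b ^ 2) / ν] := by
  change ![-(a * γ), b * γ, (a * a - b * b) / ν] = _
  exact Matrix.vec3_eq (by ring) (by ring) (by ring)

theorem harmonic_condition_iff {ν1 ν2 : ℝ} (hν1 : ν1 ≠ 0) (hν2 : ν2 ≠ 0) (a b γ : ℝ) :
    ![-(γ * a / ν1), γ * b / ν1, (a ^ 2 - b ^ 2) / (ν1 * ν2)] = 0 ↔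
      (a = 0 ∧ b = 0) ∨ (γ = 0 ∧ a ^ 2 = b ^ 2) := by
  have hcoord : ![-(γ * a / ν1), γ * b / ν1, (a ^ 2 - b ^ 2) / (ν1 * ν2)] = 0 ↔
      (γ = 0 ∨ a = 0) ∧ (γ = 0 ∨ b = 0) ∧ a ^ 2 = b ^ 2 := by
    simp [funext_iff, Fin.forall_fin_succ, hν1, hν2, sub_eq_zero]
  rw [hcoord]
  constructor
  · rintro ⟨hγa | ha, hγb | hb, hab⟩
    · exact .inr ⟨hγa, hab⟩
    · exact .inr ⟨hγa, hab⟩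
    · exact .inr ⟨hγb, hab⟩
    · exact .inl ⟨ha, hb⟩
  · rintro (⟨rfl, rfl⟩ | ⟨rfl, hab⟩)
    · simp
    · simp [hab]

/-- For `sol` with metrics `diag(1,1,ν₁)`, `diag(1,1,ν₂)` and the homomorphism
`X₁↦0, X₂↦0, X₃↦aX₁+bX₂+γX₃`, one has
`τ(ξ) = −(γa/ν₁)X₁ + (γb/ν₁)X₂ + ((a²−b²)/(ν₁ν₂))X₃`, hence `ξ` is harmonic
iff `(a=b=0)` or `(γ=0 and a²=b²)`. -/
theorem sol_harmonic
    (ν1 ν2 : ℝ) (hν1 : 0 < ν1) (hν2 : 0 < ν2)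
    (a b γ : ℝ)
    (ξ : (Fin 3 → ℝ) → (Fin 3 → ℝ))
    (hξ : ξ = fun u => ![a * u 2, b * u 2, γ * u 2])
    (B : (Fin 3 → ℝ) → (Fin 3 → ℝ) → (Fin 3 → ℝ))
    -- B is the Levi-Civita product of the target metric diag(1,1,ν₂)
    (hB : ∀ u v w, 2 * ip ![1, 1, ν2] (B u v) w =
      ip ![1, 1, ν2] (brS u v) w + ip ![1, 1, ν2] (brS w u) v + ip ![1, 1, ν2] (brS w v) u)
    (τ : Fin 3 → ℝ)
    -- τ(ξ) = Σ_i B_{ξ(e_i)} ξ(e_i) for the orthonormal basis of diag(1,1,ν₁)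
    (hτ : τ = B (ξ ![1, 0, 0]) (ξ ![1, 0, 0])
            + B (ξ ![0, 1, 0]) (ξ ![0, 1, 0])
            + B (ξ ![0, 0, Real.sqrt (1/ν1)]) (ξ ![0, 0, Real.sqrt (1/ν1)])) :
    τ = ![-(γ * a / ν1), γ * b / ν1, (a^2 - b^2) / (ν1 * ν2)] ∧
      (τ = 0 ↔ ((a = 0 ∧ b = 0) ∨ (γ = 0 ∧ a^2 = b^2))) := by
  set s := Real.sqrt (1 / ν1)
  have hs : s ^ 2 = 1 / ν1 := Real.sq_sqrt (by positivity)
  have hξ_horizontal : ξ ![1, 0, 0] = 0 ∧ ξ ![0, 1, 0] = 0 := by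
    subst hξ
    constructor <;> funext i <;> fin_cases i <;> simp
  have hξ_vertical : ξ ![0, 0, s] = s • ![a, b, γ] := by
    subst hξ
    funext i
    fin_cases i <;> simp [mul_comm]
  have hτ_eq : τ = ![-(γ * a / ν1), γ * b / ν1, (a^2 - b^2) / (ν1 * ν2)] := by
    rw [hτ, eq_solLeviCivita_of_koszul hν2.ne' hB, hξ_horizontal.1, hξ_horizontal.2,
      hξ_vertical, solLeviCivita_zero_zero, solLeviCivita_smul_smul, solLeviCivita_self, hs,
      zero_add, zero_add, Matrix.smul_vec3, smul_eq_mul, smul_eq_mul, smul_eq_mul]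
    exact Matrix.vec3_eq (by ring) (by ring) (by field_simp)
  exact ⟨hτ_eq, hτ_eq ▸ harmonic_condition_iff hν1.ne' hν2.ne' a b γ⟩
end
end

section
/- Let sol carry both metrics diag(1,1,νᵢ), νᵢ>0, and let ξ map X₁↦0, X₂↦0, X₃↦aX₁+bX₂+γX₃ with γ²≠1. Then τ₂(ξ) = 0 if and only if τ(ξ) = 0; i.e., this homomorphism is biharmonic exactly when it is harmonic. -/
/-!
The Koszul formula determines the Levi-Civita product of `diag(1,1,ν)` explicitly. Since `ξ`
kills `X₁, X₂`, only the frame vector `s X₃` (`s = 1/√ν₁`) contributes, so `τ(ξ)` and `τ₂(ξ)`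
are `s²` and `s⁴` times fixed vectors `T` and `T₂`. Both vanish exactly when
`γa = γb = 0` and `a² = b²`: for `T₂` the third coordinate is `(a²−b²)(γ²ν₂ + 2(a²+b²))/ν₂²`,
whose second factor is positive unless `a = b = 0`, and then the first two coordinates reduce
to `∓γ³a`, `γ³b`.
-/

noncomputable section

def solCurvature (ν : ℝ) (u v w : Fin 3 → ℝ) : Fin 3 → ℝ :=
  solLeviCivita ν u (solLeviCivita ν v w) - solLeviCivita ν v (solLeviCivita ν u w)
    - solLeviCivita ν (brS u v) w

def solHom (a b γ : ℝ) (u : Fin 3 → ℝ) : Fin 3 → ℝ :=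
  ![a * u 2, b * u 2, γ * u 2]

/-- `s` is the `X₃`-coefficient of the third vector of the orthonormal frame of the source. -/
def tension (B : (Fin 3 → ℝ) → (Fin 3 → ℝ) → (Fin 3 → ℝ)) (ξ : (Fin 3 → ℝ) → (Fin 3 → ℝ))
    (s : ℝ) : Fin 3 → ℝ :=
  B (ξ ![1, 0, 0]) (ξ ![1, 0, 0]) + B (ξ ![0, 1, 0]) (ξ ![0, 1, 0])
    + B (ξ ![0, 0, s]) (ξ ![0, 0, s])

def bitension (B : (Fin 3 → ℝ) → (Fin 3 → ℝ) → (Fin 3 → ℝ))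
    (K : (Fin 3 → ℝ) → (Fin 3 → ℝ) → (Fin 3 → ℝ) → (Fin 3 → ℝ))
    (ξ : (Fin 3 → ℝ) → (Fin 3 → ℝ)) (s : ℝ) : Fin 3 → ℝ :=
  let τ := tension B ξ s;
  -(B (ξ ![1, 0, 0]) (B (ξ ![1, 0, 0]) τ) + K τ (ξ ![1, 0, 0]) (ξ ![1, 0, 0])
    + B (ξ ![0, 1, 0]) (B (ξ ![0, 1, 0]) τ) + K τ (ξ ![0, 1, 0]) (ξ ![0, 1, 0])
    + B (ξ ![0, 0, s]) (B (ξ ![0, 0, s]) τ) + K τ (ξ ![0, 0, s]) (ξ ![0, 0, s]))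

def solTension (ν a b γ : ℝ) : Fin 3 → ℝ :=
  ![-(γ * a), γ * b, (a ^ 2 - b ^ 2) / ν]

def solBitension (ν a b γ : ℝ) : Fin 3 → ℝ :=
  ![-(γ * a * (γ ^ 2 * ν + 2 * (a ^ 2 - b ^ 2))) / ν,
    γ * b * (γ ^ 2 * ν - 2 * (a ^ 2 - b ^ 2)) / ν,
    (a ^ 2 - b ^ 2) * (γ ^ 2 * ν + 2 * (a ^ 2 + b ^ 2)) / ν ^ 2]

theorem tension_solLeviCivita_solHom (ν a b γ s : ℝ) :
    tension (solLeviCivita ν) (solHom a b γ) s = s ^ 2 • solTension ν a b γ := by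
  funext i
  fin_cases i <;> simp [tension, solLeviCivita, solHom, solTension] <;> ring

theorem bitension_solLeviCivita_solHom (ν a b γ s : ℝ) (hν : ν ≠ 0) :
    bitension (solLeviCivita ν) (solCurvature ν) (solHom a b γ) s =
      s ^ 4 • solBitension ν a b γ := by
  funext i
  fin_cases i <;>
    simp [bitension, tension, solCurvature, solLeviCivita, solHom, brS, solBitension] <;>
    field_simp <;> ring

theorem solTension_eq_zero_iff {ν : ℝ} (hν : ν ≠ 0) (a b γ : ℝ) :
    solTension ν a b γ = 0 ↔ γ * a = 0 ∧ γ * b = 0 ∧ a ^ 2 = b ^ 2 := by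
  simp [solTension, hν, sub_eq_zero]

theorem solBitension_eq_zero_iff {ν : ℝ} (hν : 0 < ν) (a b γ : ℝ) :
    solBitension ν a b γ = 0 ↔ γ * a = 0 ∧ γ * b = 0 ∧ a ^ 2 = b ^ 2 := by
  simp only [solBitension, Matrix.cons_eq_zero_iff, Matrix.zero_empty, and_true,
    div_eq_zero_iff, neg_eq_zero, hν.ne', pow_eq_zero_iff, or_false, ne_eq, OfNat.ofNat_ne_zero,
    not_false_eq_true]
  constructor
  · rintro ⟨h₁, h₂, h₃⟩
    have hab : a ^ 2 = b ^ 2 := by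
      rcases mul_eq_zero.mp h₃ with h | h
      · exact sub_eq_zero.mp h
      · have ha : a = 0 := by nlinarith [sq_nonneg γ, sq_nonneg b, sq_nonneg a]
        have hb : b = 0 := by nlinarith [sq_nonneg γ, sq_nonneg b, sq_nonneg a]
        rw [ha, hb]
    refine ⟨(pow_eq_zero_iff three_ne_zero).mp (mul_right_cancel₀ hν.ne' ?_),
      (pow_eq_zero_iff three_ne_zero).mp (mul_right_cancel₀ hν.ne' ?_), hab⟩
    · linear_combination a ^ 2 * h₁ - 2 * γ * a ^ 3 * hab
    · linear_combination b ^ 2 * h₂ + 2 * γ * b ^ 3 * hab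
  · rintro ⟨h₁, h₂, h₃⟩
    refine ⟨?_, ?_, ?_⟩
    · linear_combination (γ ^ 2 * ν + 2 * (a ^ 2 - b ^ 2)) * h₁
    · linear_combination (γ ^ 2 * ν - 2 * (a ^ 2 - b ^ 2)) * h₂
    · linear_combination (γ ^ 2 * ν + 2 * (a ^ 2 + b ^ 2)) * h₃

theorem sol_biharmonic_iff_harmonic_general
    (ν1 ν2 : ℝ) (hν2 : 0 < ν2)
    (a b γ : ℝ)
    (ξ : (Fin 3 → ℝ) → (Fin 3 → ℝ))
    (hξ : ξ = fun u => ![a * u 2, b * u 2, γ * u 2])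
    (B : (Fin 3 → ℝ) → (Fin 3 → ℝ) → (Fin 3 → ℝ))
    -- B is the Levi-Civita product of the target metric diag(1,1,ν₂)
    (hB : ∀ u v w, 2 * ip ![1, 1, ν2] (B u v) w =
      ip ![1, 1, ν2] (brS u v) w + ip ![1, 1, ν2] (brS w u) v + ip ![1, 1, ν2] (brS w v) u)
    -- K is the curvature of the target: K(u,v)w = B_u B_v w − B_v B_u w − B_{[u,v]} w
    (K : (Fin 3 → ℝ) → (Fin 3 → ℝ) → (Fin 3 → ℝ) → (Fin 3 → ℝ))
    (hK : ∀ u v w, K u v w = B u (B v w) - B v (B u w) - B (brS u v) w)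
    (τ τ₂ : Fin 3 → ℝ)
    -- τ(ξ) = Σ_i B_{ξ(e_i)} ξ(e_i) for the orthonormal basis e of diag(1,1,ν₁)
    (hτ : τ = B (ξ ![1, 0, 0]) (ξ ![1, 0, 0])
            + B (ξ ![0, 1, 0]) (ξ ![0, 1, 0])
            + B (ξ ![0, 0, Real.sqrt (1/ν1)]) (ξ ![0, 0, Real.sqrt (1/ν1)]))
    -- τ₂(ξ) = −Σ_i (B_{ξ(e_i)} B_{ξ(e_i)} τ(ξ) + K(τ(ξ),ξ(e_i))ξ(e_i))
    (hτ₂ : τ₂ = -(B (ξ ![1, 0, 0]) (B (ξ ![1, 0, 0]) τ) + K τ (ξ ![1, 0, 0]) (ξ ![1, 0, 0])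
      + B (ξ ![0, 1, 0]) (B (ξ ![0, 1, 0]) τ) + K τ (ξ ![0, 1, 0]) (ξ ![0, 1, 0])
      + B (ξ ![0, 0, Real.sqrt (1/ν1)]) (B (ξ ![0, 0, Real.sqrt (1/ν1)]) τ)
        + K τ (ξ ![0, 0, Real.sqrt (1/ν1)]) (ξ ![0, 0, Real.sqrt (1/ν1)]))) :
    τ₂ = 0 ↔ τ = 0 := by
  obtain rfl : B = solLeviCivita ν2 := eq_solLeviCivita_of_koszul hν2.ne' hB
  obtain rfl : K = solCurvature ν2 := by funext u v w; exact hK u v w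
  set s := Real.sqrt (1 / ν1)
  change ξ = solHom a b γ at hξ
  subst hξ hτ hτ₂
  change bitension (solLeviCivita ν2) (solCurvature ν2) (solHom a b γ) s = 0 ↔
    tension (solLeviCivita ν2) (solHom a b γ) s = 0
  rw [tension_solLeviCivita_solHom, bitension_solLeviCivita_solHom _ _ _ _ _ hν2.ne']
  rcases eq_or_ne s 0 with hs | hs
  · simp [hs]
  · rw [smul_eq_zero_iff_right (pow_ne_zero _ hs), smul_eq_zero_iff_right (pow_ne_zero _ hs),
      solBitension_eq_zero_iff hν2, solTension_eq_zero_iff hν2.ne']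

/-- For `sol` with metrics `diag(1,1,ν₁)`, `diag(1,1,ν₂)` and the homomorphism
`X₁↦0, X₂↦0, X₃↦aX₁+bX₂+γX₃` with `γ² ≠ 1`, `ξ` is biharmonic iff it is harmonic. -/
theorem sol_biharmonic_iff_harmonic
    (ν1 ν2 : ℝ) (hν1 : 0 < ν1) (hν2 : 0 < ν2)
    (a b γ : ℝ) (hγ : γ^2 ≠ 1)
    (ξ : (Fin 3 → ℝ) → (Fin 3 → ℝ))
    (hξ : ξ = fun u => ![a * u 2, b * u 2, γ * u 2])
    (B : (Fin 3 → ℝ) → (Fin 3 → ℝ) → (Fin 3 → ℝ))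
    -- B is the Levi-Civita product of the target metric diag(1,1,ν₂)
    (hB : ∀ u v w, 2 * ip ![1, 1, ν2] (B u v) w =
      ip ![1, 1, ν2] (brS u v) w + ip ![1, 1, ν2] (brS w u) v + ip ![1, 1, ν2] (brS w v) u)
    -- K is the curvature of the target: K(u,v)w = B_u B_v w − B_v B_u w − B_{[u,v]} w
    (K : (Fin 3 → ℝ) → (Fin 3 → ℝ) → (Fin 3 → ℝ) → (Fin 3 → ℝ))
    (hK : ∀ u v w, K u v w = B u (B v w) - B v (B u w) - B (brS u v) w)
    (τ τ₂ : Fin 3 → ℝ)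
    -- τ(ξ) = Σ_i B_{ξ(e_i)} ξ(e_i) for the orthonormal basis e of diag(1,1,ν₁)
    (hτ : τ = B (ξ ![1, 0, 0]) (ξ ![1, 0, 0])
            + B (ξ ![0, 1, 0]) (ξ ![0, 1, 0])
            + B (ξ ![0, 0, Real.sqrt (1/ν1)]) (ξ ![0, 0, Real.sqrt (1/ν1)]))
    -- τ₂(ξ) = −Σ_i (B_{ξ(e_i)} B_{ξ(e_i)} τ(ξ) + K(τ(ξ),ξ(e_i))ξ(e_i))
    (hτ₂ : τ₂ = -(B (ξ ![1, 0, 0]) (B (ξ ![1, 0, 0]) τ) + K τ (ξ ![1, 0, 0]) (ξ ![1, 0, 0])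
      + B (ξ ![0, 1, 0]) (B (ξ ![0, 1, 0]) τ) + K τ (ξ ![0, 1, 0]) (ξ ![0, 1, 0])
      + B (ξ ![0, 0, Real.sqrt (1/ν1)]) (B (ξ ![0, 0, Real.sqrt (1/ν1)]) τ)
        + K τ (ξ ![0, 0, Real.sqrt (1/ν1)]) (ξ ![0, 0, Real.sqrt (1/ν1)]))) :
    τ₂ = 0 ↔ τ = 0 :=
  sol_biharmonic_iff_harmonic_general ν1 ν2 hν2 a b γ ξ hξ B hB K hK τ τ₂ hτ hτ₂
end
end

section
/- With su(2) metrics diag(λ₁,μ₁,ν₁) and diag(λ₂,μ₂,ν₂) and ξ₁(a) the rotation in the (X₂,X₃)-plane by angle a, if μ₂≠ν₂ and μ₁≠ν₁ then ξ₁(a) is harmonic iff sin(2a)=0, and ξ₁(a) is biharmonic but not harmonic iff cos²(a)=1/2. -/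
noncomputable section

/-- The bracket of `su(2)`: `[X₁,X₂]=X₃`, `[X₂,X₃]=X₁`, `[X₃,X₁]=X₂`. -/
def brSU (u v : Fin 3 → ℝ) : Fin 3 → ℝ :=
  ![u 1 * v 2 - u 2 * v 1, u 2 * v 0 - u 0 * v 2, u 0 * v 1 - u 1 * v 0]

/-!
The Koszul formula determines the Levi-Civita product of a diagonal metric on su(2) explicitly.
The rotation fixes X₁, and B(X₁,X₁) = 0, so only the two frame vectors in the rotated plane
contribute: the tension field is C/2 · sin(2a) · X₁ with C = (μ₂-ν₂)(1/μ₁-1/ν₁)/λ₂ ≠ 0, and the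
operator τ ↦ -Σᵢ (B_{ξeᵢ} B_{ξeᵢ} τ + K(τ, ξeᵢ) ξeᵢ) acts on multiples of X₁ as multiplication by
-C cos(2a). Hence τ₂ = 0 iff sin(2a) cos(2a) = 0, and cos(2a) = 0 forces sin(2a) ≠ 0.
-/

open Real

def leviCivitaSU2 (l μ ν : ℝ) (u v : Fin 3 → ℝ) : Fin 3 → ℝ :=
  ![(u 1 * v 2 - u 2 * v 1) / 2 + (ν - μ) * (u 1 * v 2 + u 2 * v 1) / (2 * l),
    (u 2 * v 0 - u 0 * v 2) / 2 + (l - ν) * (u 2 * v 0 + u 0 * v 2) / (2 * μ),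
    (u 0 * v 1 - u 1 * v 0) / 2 + (μ - l) * (u 0 * v 1 + u 1 * v 0) / (2 * ν)]

def curvatureSU2 (l μ ν : ℝ) (u v w : Fin 3 → ℝ) : Fin 3 → ℝ :=
  leviCivitaSU2 l μ ν u (leviCivitaSU2 l μ ν v w) - leviCivitaSU2 l μ ν v (leviCivitaSU2 l μ ν u w)
    - leviCivitaSU2 l μ ν (brSU u v) w

def rotationX1 (a : ℝ) (u : Fin 3 → ℝ) : Fin 3 → ℝ :=
  ![u 0, cos a * u 1 + sin a * u 2, -sin a * u 1 + cos a * u 2]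

theorem eq_leviCivitaSU2_of_koszul {l μ ν : ℝ} (hl : l ≠ 0) (hμ : μ ≠ 0) (hν : ν ≠ 0)
    {B : (Fin 3 → ℝ) → (Fin 3 → ℝ) → (Fin 3 → ℝ)}
    (hB : ∀ u v w, 2 * ip ![l, μ, ν] (B u v) w =
      ip ![l, μ, ν] (brSU u v) w + ip ![l, μ, ν] (brSU w u) v + ip ![l, μ, ν] (brSU w v) u) :
    B = leviCivitaSU2 l μ ν := by
  funext u v k
  have h := hB u v (Pi.single k 1)
  fin_cases k <;> simp [ip, brSU, leviCivitaSU2] at h ⊢ <;> field_simp <;> linarith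

theorem tension_rotationX1 (l μ ν a s t r : ℝ) :
    leviCivitaSU2 l μ ν (rotationX1 a ![s, 0, 0]) (rotationX1 a ![s, 0, 0])
      + leviCivitaSU2 l μ ν (rotationX1 a ![0, t, 0]) (rotationX1 a ![0, t, 0])
      + leviCivitaSU2 l μ ν (rotationX1 a ![0, 0, r]) (rotationX1 a ![0, 0, r])
      = ![(μ - ν) * (t ^ 2 - r ^ 2) / l / 2 * sin (2 * a), 0, 0] := by
  funext k
  fin_cases k
  · simp [leviCivitaSU2, rotationX1, sin_two_mul]
    ring
  all_goals simp [leviCivitaSU2, rotationX1]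

theorem bitension_rotationX1 (l μ ν a s t r x : ℝ) :
    -(leviCivitaSU2 l μ ν (rotationX1 a ![s, 0, 0])
          (leviCivitaSU2 l μ ν (rotationX1 a ![s, 0, 0]) ![x, 0, 0])
        + curvatureSU2 l μ ν ![x, 0, 0] (rotationX1 a ![s, 0, 0]) (rotationX1 a ![s, 0, 0])
      + leviCivitaSU2 l μ ν (rotationX1 a ![0, t, 0])
          (leviCivitaSU2 l μ ν (rotationX1 a ![0, t, 0]) ![x, 0, 0])
        + curvatureSU2 l μ ν ![x, 0, 0] (rotationX1 a ![0, t, 0]) (rotationX1 a ![0, t, 0])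
      + leviCivitaSU2 l μ ν (rotationX1 a ![0, 0, r])
          (leviCivitaSU2 l μ ν (rotationX1 a ![0, 0, r]) ![x, 0, 0])
        + curvatureSU2 l μ ν ![x, 0, 0] (rotationX1 a ![0, 0, r]) (rotationX1 a ![0, 0, r]))
      = ![-((μ - ν) * (t ^ 2 - r ^ 2) / l * cos (2 * a)) * x, 0, 0] := by
  funext k
  fin_cases k
  · simp [curvatureSU2, leviCivitaSU2, rotationX1, brSU, cos_two_mul']
    ring
  all_goals simp [curvatureSU2, leviCivitaSU2, rotationX1, brSU]

theorem cos_sq_eq_half_iff_cos_two_mul_eq_zero (x : ℝ) :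
    cos x ^ 2 = 1 / 2 ↔ cos (2 * x) = 0 := by
  rw [cos_sq]
  constructor <;> intro h <;> linarith

theorem su2_rotation_harmonic_biharmonic_general
    (l1 μ1 ν1 l2 μ2 ν2 : ℝ)
    (hμ1 : 0 < μ1) (hν1 : 0 < ν1)
    (hl2 : 0 < l2) (hμ2 : 0 < μ2) (hν2 : 0 < ν2)
    (h2 : μ2 ≠ ν2) (h1 : μ1 ≠ ν1)
    (a : ℝ)
    (ξ : (Fin 3 → ℝ) → (Fin 3 → ℝ))
    (hξ : ξ = fun u => ![u 0, Real.cos a * u 1 + Real.sin a * u 2,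
      -Real.sin a * u 1 + Real.cos a * u 2])
    (B : (Fin 3 → ℝ) → (Fin 3 → ℝ) → (Fin 3 → ℝ))
    -- B is the Levi-Civita product of the target metric diag(λ₂,μ₂,ν₂)
    (hB : ∀ u v w, 2 * ip ![l2, μ2, ν2] (B u v) w =
      ip ![l2, μ2, ν2] (brSU u v) w + ip ![l2, μ2, ν2] (brSU w u) v
        + ip ![l2, μ2, ν2] (brSU w v) u)
    -- K is the curvature of the target: K(u,v)w = B_u B_v w − B_v B_u w − B_{[u,v]} w
    (K : (Fin 3 → ℝ) → (Fin 3 → ℝ) → (Fin 3 → ℝ) → (Fin 3 → ℝ))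
    (hK : ∀ u v w, K u v w = B u (B v w) - B v (B u w) - B (brSU u v) w)
    (τ τ₂ : Fin 3 → ℝ)
    -- τ(ξ) = Σ_i B_{ξ(e_i)} ξ(e_i) for the orthonormal basis e of diag(λ₁,μ₁,ν₁)
    (hτ : τ = B (ξ ![Real.sqrt (1/l1), 0, 0]) (ξ ![Real.sqrt (1/l1), 0, 0])
            + B (ξ ![0, Real.sqrt (1/μ1), 0]) (ξ ![0, Real.sqrt (1/μ1), 0])
            + B (ξ ![0, 0, Real.sqrt (1/ν1)]) (ξ ![0, 0, Real.sqrt (1/ν1)]))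
    -- τ₂(ξ) = −Σ_i (B_{ξ(e_i)} B_{ξ(e_i)} τ(ξ) + K(τ(ξ),ξ(e_i))ξ(e_i))
    (hτ₂ : τ₂ = -(B (ξ ![Real.sqrt (1/l1), 0, 0]) (B (ξ ![Real.sqrt (1/l1), 0, 0]) τ)
        + K τ (ξ ![Real.sqrt (1/l1), 0, 0]) (ξ ![Real.sqrt (1/l1), 0, 0])
      + B (ξ ![0, Real.sqrt (1/μ1), 0]) (B (ξ ![0, Real.sqrt (1/μ1), 0]) τ)
        + K τ (ξ ![0, Real.sqrt (1/μ1), 0]) (ξ ![0, Real.sqrt (1/μ1), 0])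
      + B (ξ ![0, 0, Real.sqrt (1/ν1)]) (B (ξ ![0, 0, Real.sqrt (1/ν1)]) τ)
        + K τ (ξ ![0, 0, Real.sqrt (1/ν1)]) (ξ ![0, 0, Real.sqrt (1/ν1)]))) :
    (τ = 0 ↔ Real.sin (2 * a) = 0) ∧
      ((τ₂ = 0 ∧ τ ≠ 0) ↔ Real.cos a ^ 2 = 1/2) := by
  have hBlc : B = leviCivitaSU2 l2 μ2 ν2 := eq_leviCivitaSU2_of_koszul hl2.ne' hμ2.ne' hν2.ne' hB
  have hKcurv : K = curvatureSU2 l2 μ2 ν2 := by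
    funext u v w
    rw [hK, hBlc, curvatureSU2]
  have hξrot : ξ = rotationX1 a := hξ
  subst hBlc hKcurv hξrot
  set C := (μ2 - ν2) * (1 / μ1 - 1 / ν1) / l2
  have hC : C ≠ 0 := by
    have hinv : 1 / μ1 ≠ 1 / ν1 := by simpa using h1
    exact div_ne_zero (mul_ne_zero (sub_ne_zero.2 h2) (sub_ne_zero.2 hinv)) hl2.ne'
  have hτC : τ = ![C / 2 * sin (2 * a), 0, 0] := by
    rw [hτ, tension_rotationX1, sq_sqrt (by positivity), sq_sqrt (by positivity)]
  have hτ₂C : τ₂ = ![-(C * cos (2 * a)) * (C / 2 * sin (2 * a)), 0, 0] := by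
    rw [hτ₂, hτC, bitension_rotationX1, sq_sqrt (by positivity), sq_sqrt (by positivity)]
  have hτ0 : τ = 0 ↔ sin (2 * a) = 0 := by simp [hτC, hC]
  have hτ₂0 : τ₂ = 0 ↔ cos (2 * a) = 0 ∨ sin (2 * a) = 0 := by simp [hτ₂C, hC]
  have hsin : cos (2 * a) = 0 → sin (2 * a) ≠ 0 := fun hc hs => by
    simpa [hs, hc] using sin_sq_add_cos_sq (2 * a)
  rw [hτ₂0, ne_eq, hτ0, cos_sq_eq_half_iff_cos_two_mul_eq_zero]
  tauto

/-- For `su(2)` with metrics `diag(λ₁,μ₁,ν₁)`, `diag(λ₂,μ₂,ν₂)`, with `μ₂≠ν₂`, `μ₁≠ν₁`,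
the rotation `ξ₁(a)` in the `(X₂,X₃)`-plane is harmonic iff `sin(2a)=0`, and
biharmonic not harmonic iff `cos²(a)=1/2`. -/
theorem su2_rotation_harmonic_biharmonic
    (l1 μ1 ν1 l2 μ2 ν2 : ℝ)
    (hl1 : 0 < l1) (hμ1 : 0 < μ1) (hν1 : 0 < ν1)
    (hl2 : 0 < l2) (hμ2 : 0 < μ2) (hν2 : 0 < ν2)
    (h2 : μ2 ≠ ν2) (h1 : μ1 ≠ ν1)
    (a : ℝ)
    (ξ : (Fin 3 → ℝ) → (Fin 3 → ℝ))
    (hξ : ξ = fun u => ![u 0, Real.cos a * u 1 + Real.sin a * u 2,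
      -Real.sin a * u 1 + Real.cos a * u 2])
    (B : (Fin 3 → ℝ) → (Fin 3 → ℝ) → (Fin 3 → ℝ))
    -- B is the Levi-Civita product of the target metric diag(λ₂,μ₂,ν₂)
    (hB : ∀ u v w, 2 * ip ![l2, μ2, ν2] (B u v) w =
      ip ![l2, μ2, ν2] (brSU u v) w + ip ![l2, μ2, ν2] (brSU w u) v
        + ip ![l2, μ2, ν2] (brSU w v) u)
    -- K is the curvature of the target: K(u,v)w = B_u B_v w − B_v B_u w − B_{[u,v]} w
    (K : (Fin 3 → ℝ) → (Fin 3 → ℝ) → (Fin 3 → ℝ) → (Fin 3 → ℝ))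
    (hK : ∀ u v w, K u v w = B u (B v w) - B v (B u w) - B (brSU u v) w)
    (τ τ₂ : Fin 3 → ℝ)
    -- τ(ξ) = Σ_i B_{ξ(e_i)} ξ(e_i) for the orthonormal basis e of diag(λ₁,μ₁,ν₁)
    (hτ : τ = B (ξ ![Real.sqrt (1/l1), 0, 0]) (ξ ![Real.sqrt (1/l1), 0, 0])
            + B (ξ ![0, Real.sqrt (1/μ1), 0]) (ξ ![0, Real.sqrt (1/μ1), 0])
            + B (ξ ![0, 0, Real.sqrt (1/ν1)]) (ξ ![0, 0, Real.sqrt (1/ν1)]))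
    -- τ₂(ξ) = −Σ_i (B_{ξ(e_i)} B_{ξ(e_i)} τ(ξ) + K(τ(ξ),ξ(e_i))ξ(e_i))
    (hτ₂ : τ₂ = -(B (ξ ![Real.sqrt (1/l1), 0, 0]) (B (ξ ![Real.sqrt (1/l1), 0, 0]) τ)
        + K τ (ξ ![Real.sqrt (1/l1), 0, 0]) (ξ ![Real.sqrt (1/l1), 0, 0])
      + B (ξ ![0, Real.sqrt (1/μ1), 0]) (B (ξ ![0, Real.sqrt (1/μ1), 0]) τ)
        + K τ (ξ ![0, Real.sqrt (1/μ1), 0]) (ξ ![0, Real.sqrt (1/μ1), 0])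
      + B (ξ ![0, 0, Real.sqrt (1/ν1)]) (B (ξ ![0, 0, Real.sqrt (1/ν1)]) τ)
        + K τ (ξ ![0, 0, Real.sqrt (1/ν1)]) (ξ ![0, 0, Real.sqrt (1/ν1)]))) :
    (τ = 0 ↔ Real.sin (2 * a) = 0) ∧
      ((τ₂ = 0 ∧ τ ≠ 0) ↔ Real.cos a ^ 2 = 1/2) :=
  su2_rotation_harmonic_biharmonic_general l1 μ1 ν1 l2 μ2 ν2 hμ1 hν1 hl2 hμ2 hν2 h2 h1 a ξ hξ B hB K
    hK τ τ₂ hτ hτ₂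
end
end

section
/- Let sl(2,ℝ) have basis (X₁,X₂,X₃) with [X₁,X₂]=−X₃, [X₂,X₃]=X₁, [X₃,X₁]=X₂, with metrics diag(λ₁,μ₁,ν₁) and diag(λ₂,μ₂,ν₂) (all entries positive). The hyperbolic boost ξ₁(a): X₁↦X₁, X₂↦cosh(a)X₂+sinh(a)X₃, X₃↦sinh(a)X₂+cosh(a)X₃ satisfies τ(ξ₁(a)) = −(cosh(a)sinh(a)(μ₂+ν₂)(μ₁+ν₁)/(λ₂μ₁ν₁)) X₁; consequently ξ₁(a) is harmonic if and only if a = 0. -/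
/-!
Since `[u, u] = 0`, Koszul's formula for the Levi-Civita product of a left-invariant metric
collapses to `⟨B u u, w⟩ = ⟨[w, u], u⟩`, so for a diagonal metric on `sl(2,ℝ)` the vector
`B u u` is an explicit quadratic form in `u`. The boost sends the orthonormal basis of the
source to `(x, 0, 0)`, `(0, c q, s q)`, `(0, s r, c r)` with `c = cosh a`, `s = sinh a`,
`q² = 1/μ₁`, `r² = 1/ν₁`; only the `u₁ u₂` term of `B u u` survives, in the `X₁` direction,
and the sum is `-c s (μ₂ + ν₂)(1/μ₁ + 1/ν₁)/λ₂`. As `cosh a > 0`, it vanishes iff `sinh a = 0`.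
-/

noncomputable section

/-- The bracket of `sl(2,ℝ)`: `[X₁,X₂]=−X₃`, `[X₂,X₃]=X₁`, `[X₃,X₁]=X₂`. -/
def brSL (u v : Fin 3 → ℝ) : Fin 3 → ℝ :=
  ![u 1 * v 2 - u 2 * v 1, u 2 * v 0 - u 0 * v 2, u 1 * v 0 - u 0 * v 1]

open Real

/-- Koszul's formula for the left-invariant metric `ip d`; it pins `B` down once every `d i ≠ 0`. -/
def IsLeviCivitaProduct (d : Fin 3 → ℝ) (B : (Fin 3 → ℝ) → (Fin 3 → ℝ) → (Fin 3 → ℝ)) :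
    Prop :=
  ∀ u v w, 2 * ip d (B u v) w = ip d (brSL u v) w + ip d (brSL w u) v + ip d (brSL w v) u

theorem brSL_self (u : Fin 3 → ℝ) : brSL u u = 0 := by
  ext i; fin_cases i <;> simp [brSL] <;> ring

theorem ip_zero_left (d v : Fin 3 → ℝ) : ip d 0 v = 0 := by
  simp [ip]

theorem ip_single_one_right (d v : Fin 3 → ℝ) (k : Fin 3) :
    ip d v (Pi.single k 1) = d k * v k := by
  fin_cases k <;> simp [ip]

section LeviCivita

variable {d : Fin 3 → ℝ} {B : (Fin 3 → ℝ) → (Fin 3 → ℝ) → (Fin 3 → ℝ)}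

theorem IsLeviCivitaProduct.ip_self (hB : IsLeviCivitaProduct d B) (u w : Fin 3 → ℝ) :
    ip d (B u u) w = ip d (brSL w u) u := by
  have h := hB u u w
  rw [brSL_self, ip_zero_left] at h
  linarith

theorem IsLeviCivitaProduct.self_eq (hB : IsLeviCivitaProduct d B) (hd : ∀ i, d i ≠ 0)
    (u : Fin 3 → ℝ) :
    B u u = ![-(d 1 + d 2) * u 1 * u 2 / d 0, (d 0 + d 2) * u 0 * u 2 / d 1,
      (d 1 - d 0) * u 0 * u 1 / d 2] := by
  ext k
  have h := hB.ip_self u (Pi.single k 1)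
  rw [ip_single_one_right] at h
  fin_cases k <;> simp [ip, brSL] at h ⊢ <;> rw [eq_div_iff (hd _)] <;> linarith

end LeviCivita

theorem boost_coeff_eq_zero_iff {l2 μ1 ν1 μ2 ν2 : ℝ} (hl2 : 0 < l2) (hμ1 : 0 < μ1)
    (hν1 : 0 < ν1) (hμ2 : 0 < μ2) (hν2 : 0 < ν2) (a : ℝ) :
    -(cosh a * sinh a * (μ2 + ν2) * (μ1 + ν1) / (l2 * μ1 * ν1)) = 0 ↔ a = 0 := by
  have hK : (μ2 + ν2) * (μ1 + ν1) / (l2 * μ1 * ν1) ≠ 0 := by positivity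
  rw [neg_eq_zero, mul_assoc _ (μ2 + ν2), mul_div_assoc, mul_eq_zero, mul_eq_zero]
  simp [(cosh_pos a).ne', hK, sinh_eq_zero]

theorem vecCons_zero_zero_eq_zero_iff (x : ℝ) : (![x, 0, 0] : Fin 3 → ℝ) = 0 ↔ x = 0 := by
  constructor
  · intro h
    simpa using congrFun h 0
  · rintro rfl
    ext k; fin_cases k <;> rfl

theorem sl2_boost_tension_field_general
    (l1 μ1 ν1 l2 μ2 ν2 : ℝ)
    (hμ1 : 0 < μ1) (hν1 : 0 < ν1)
    (hl2 : 0 < l2) (hμ2 : 0 < μ2) (hν2 : 0 < ν2)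
    (a : ℝ)
    (ξ : (Fin 3 → ℝ) → (Fin 3 → ℝ))
    (hξ : ξ = fun u => ![u 0, Real.cosh a * u 1 + Real.sinh a * u 2,
      Real.sinh a * u 1 + Real.cosh a * u 2])
    (B : (Fin 3 → ℝ) → (Fin 3 → ℝ) → (Fin 3 → ℝ))
    -- B is the Levi-Civita product of the target metric diag(λ₂,μ₂,ν₂)
    (hB : ∀ u v w, 2 * ip ![l2, μ2, ν2] (B u v) w =
      ip ![l2, μ2, ν2] (brSL u v) w + ip ![l2, μ2, ν2] (brSL w u) v
        + ip ![l2, μ2, ν2] (brSL w v) u)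
    (τ : Fin 3 → ℝ)
    -- τ(ξ) = Σ_i B_{ξ(e_i)} ξ(e_i) for the orthonormal basis of diag(λ₁,μ₁,ν₁)
    (hτ : τ = B (ξ ![Real.sqrt (1/l1), 0, 0]) (ξ ![Real.sqrt (1/l1), 0, 0])
            + B (ξ ![0, Real.sqrt (1/μ1), 0]) (ξ ![0, Real.sqrt (1/μ1), 0])
            + B (ξ ![0, 0, Real.sqrt (1/ν1)]) (ξ ![0, 0, Real.sqrt (1/ν1)])) :
    τ = ![-(Real.cosh a * Real.sinh a * (μ2 + ν2) * (μ1 + ν1) / (l2 * μ1 * ν1)), 0, 0] ∧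
      (τ = 0 ↔ a = 0) := by
  have hd : ∀ i, ![l2, μ2, ν2] i ≠ 0 := by
    intro i; fin_cases i <;> simp [hl2.ne', hμ2.ne', hν2.ne']
  have hτ_eq :
      τ = ![-(cosh a * sinh a * (μ2 + ν2) * (μ1 + ν1) / (l2 * μ1 * ν1)), 0, 0] := by
    subst hξ hτ
    simp only [IsLeviCivitaProduct.self_eq hB hd]
    ext k; fin_cases k
    · simp only [Fin.zero_eta, Pi.add_apply, Matrix.cons_val_zero, Matrix.cons_val_one,
        Matrix.cons_val_two, Matrix.head_cons, Matrix.tail_cons, mul_zero, zero_mul, zero_div,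
        add_zero, zero_add]
      field_simp
      rw [sq_sqrt (one_div_pos.2 hμ1).le, sq_sqrt (one_div_pos.2 hν1).le]
      field_simp
      ring
    all_goals simp
  refine ⟨hτ_eq, ?_⟩
  rw [hτ_eq, vecCons_zero_zero_eq_zero_iff]
  exact boost_coeff_eq_zero_iff hl2 hμ1 hν1 hμ2 hν2 a

/-- For `sl(2,ℝ)` with metrics `diag(λ₁,μ₁,ν₁)`, `diag(λ₂,μ₂,ν₂)`, the boost
`ξ₁(a): X₁↦X₁, X₂↦cosh(a)X₂+sinh(a)X₃, X₃↦sinh(a)X₂+cosh(a)X₃` satisfies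
`τ = −(cosh(a)sinh(a)(μ₂+ν₂)(μ₁+ν₁)/(λ₂μ₁ν₁)) X₁`; hence it is harmonic iff `a=0`. -/
theorem sl2_boost_tension_field
    (l1 μ1 ν1 l2 μ2 ν2 : ℝ)
    (hl1 : 0 < l1) (hμ1 : 0 < μ1) (hν1 : 0 < ν1)
    (hl2 : 0 < l2) (hμ2 : 0 < μ2) (hν2 : 0 < ν2)
    (a : ℝ)
    (ξ : (Fin 3 → ℝ) → (Fin 3 → ℝ))
    (hξ : ξ = fun u => ![u 0, Real.cosh a * u 1 + Real.sinh a * u 2,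
      Real.sinh a * u 1 + Real.cosh a * u 2])
    (B : (Fin 3 → ℝ) → (Fin 3 → ℝ) → (Fin 3 → ℝ))
    -- B is the Levi-Civita product of the target metric diag(λ₂,μ₂,ν₂)
    (hB : ∀ u v w, 2 * ip ![l2, μ2, ν2] (B u v) w =
      ip ![l2, μ2, ν2] (brSL u v) w + ip ![l2, μ2, ν2] (brSL w u) v
        + ip ![l2, μ2, ν2] (brSL w v) u)
    (τ : Fin 3 → ℝ)
    -- τ(ξ) = Σ_i B_{ξ(e_i)} ξ(e_i) for the orthonormal basis of diag(λ₁,μ₁,ν₁)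
    (hτ : τ = B (ξ ![Real.sqrt (1/l1), 0, 0]) (ξ ![Real.sqrt (1/l1), 0, 0])
            + B (ξ ![0, Real.sqrt (1/μ1), 0]) (ξ ![0, Real.sqrt (1/μ1), 0])
            + B (ξ ![0, 0, Real.sqrt (1/ν1)]) (ξ ![0, 0, Real.sqrt (1/ν1)])) :
    τ = ![-(Real.cosh a * Real.sinh a * (μ2 + ν2) * (μ1 + ν1) / (l2 * μ1 * ν1)), 0, 0] ∧
      (τ = 0 ↔ a = 0) :=
  sl2_boost_tension_field_general l1 μ1 ν1 l2 μ2 ν2 hμ1 hν1 hl2 hμ2 hν2 a ξ hξ B hB τ hτ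
end
end

section
/- For sl(2,ℝ) with metrics diag(λ₁,μ₁,ν₁) and diag(λ₂,μ₂,ν₂) (positive entries), the boost ξ₁(a) (X₁↦X₁, X₂↦cosh(a)X₂+sinh(a)X₃, X₃↦sinh(a)X₂+cosh(a)X₃) is biharmonic if and only if it is harmonic, i.e., if and only if a=0. -/
noncomputable section

/-!
The Koszul formula determines the Levi-Civita product of `diag(λ₂,μ₂,ν₂)` explicitly (`lcSL`).
The boost fixes `X₁` and preserves `span(X₂,X₃)`, and `B_v v ∈ ℝX₁` for `v` in that span; hence
`τ = t X₁` with `t = -(μ₂+ν₂)(1/μ₁+1/ν₁) cosh a sinh a / λ₂`, which vanishes iff `a = 0`.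
For `w ∈ ℝX₁` and `v ∈ span(X₂,X₃)` the summand `B_v B_v w + K(w,v)v` of `τ₂` equals
`-(μ₂+ν₂)(v₂²+v₃²)/λ₂ · w`, so `τ₂ = κ τ` with `κ = (μ₂+ν₂)(1/μ₁+1/ν₁)(cosh²a+sinh²a)/λ₂ > 0`.
-/

def lcSL (d : Fin 3 → ℝ) (u v : Fin 3 → ℝ) : Fin 3 → ℝ :=
  ![((d 0 - d 1 - d 2) * u 1 * v 2 - (d 0 + d 1 + d 2) * u 2 * v 1) / (2 * d 0),
    ((d 0 + d 1 + d 2) * u 2 * v 0 + (d 0 - d 1 + d 2) * u 0 * v 2) / (2 * d 1),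
    ((d 1 + d 2 - d 0) * u 1 * v 0 + (d 1 - d 2 - d 0) * u 0 * v 1) / (2 * d 2)]

def curvSL (d : Fin 3 → ℝ) (u v w : Fin 3 → ℝ) : Fin 3 → ℝ :=
  lcSL d u (lcSL d v w) - lcSL d v (lcSL d u w) - lcSL d (brSL u v) w

def bitensionTermSL (d : Fin 3 → ℝ) (v w : Fin 3 → ℝ) : Fin 3 → ℝ :=
  lcSL d v (lcSL d v w) + curvSL d w v v

def tensionSL (d : Fin 3 → ℝ) (f : Fin 3 → Fin 3 → ℝ) : Fin 3 → ℝ :=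
  ∑ i, lcSL d (f i) (f i)

def bitensionSL (d : Fin 3 → ℝ) (f : Fin 3 → Fin 3 → ℝ) : Fin 3 → ℝ :=
  -∑ i, bitensionTermSL d (f i) (tensionSL d f)

def diagFrame (x y z : ℝ) : Fin 3 → Fin 3 → ℝ :=
  ![![x, 0, 0], ![0, y, 0], ![0, 0, z]]

def boost (a : ℝ) (u : Fin 3 → ℝ) : Fin 3 → ℝ :=
  ![u 0, Real.cosh a * u 1 + Real.sinh a * u 2, Real.sinh a * u 1 + Real.cosh a * u 2]

section

variable (a : ℝ)

theorem boost_X₁ (x : ℝ) : boost a ![x, 0, 0] = ![x, 0, 0] := by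
  simp [boost]

theorem boost_X₂ (y : ℝ) : boost a ![0, y, 0] = ![0, Real.cosh a * y, Real.sinh a * y] := by
  simp [boost]

theorem boost_X₃ (z : ℝ) : boost a ![0, 0, z] = ![0, Real.sinh a * z, Real.cosh a * z] := by
  simp [boost]

end

section

variable {d : Fin 3 → ℝ}

theorem eq_lcSL_of_koszul (hd : ∀ i, d i ≠ 0) {B : (Fin 3 → ℝ) → (Fin 3 → ℝ) → (Fin 3 → ℝ)}
    (hB : ∀ u v w, 2 * ip d (B u v) w =
      ip d (brSL u v) w + ip d (brSL w u) v + ip d (brSL w v) u) :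
    B = lcSL d := by
  funext u v i
  have h := hB u v (Pi.single i 1)
  have := hd 0; have := hd 1; have := hd 2
  fin_cases i <;> simp [ip, brSL, lcSL] at h ⊢ <;> field_simp <;> linarith

variable (d)

theorem lcSL_self_X₁ (x : ℝ) : lcSL d ![x, 0, 0] ![x, 0, 0] = 0 := by
  ext i; fin_cases i <;> simp [lcSL]

theorem lcSL_self_X₂₃ (y z : ℝ) :
    lcSL d ![0, y, z] ![0, y, z] = ![-((d 1 + d 2) * y * z / d 0), 0, 0] := by
  ext i; fin_cases i <;> simp [lcSL]; ring

theorem bitensionTermSL_X₁ (x t : ℝ) : bitensionTermSL d ![x, 0, 0] ![t, 0, 0] = 0 := by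
  ext i; fin_cases i <;> simp [bitensionTermSL, curvSL, lcSL, brSL]

theorem bitensionTermSL_X₂₃ (hd : ∀ i, d i ≠ 0) (y z t : ℝ) :
    bitensionTermSL d ![0, y, z] ![t, 0, 0] =
      -((d 1 + d 2) * (y ^ 2 + z ^ 2) / d 0) • ![t, 0, 0] := by
  have := hd 1
  have := hd 2
  ext i; fin_cases i <;> simp [bitensionTermSL, curvSL, lcSL, brSL]
  field_simp
  ring

theorem tensionSL_boost (a x y z : ℝ) :
    tensionSL d (boost a ∘ diagFrame x y z) =
      ![-((d 1 + d 2) * (y ^ 2 + z ^ 2) * Real.cosh a / d 0) * Real.sinh a, 0, 0] := by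
  simp only [tensionSL, Fin.sum_univ_three, Function.comp_apply, diagFrame,
    Matrix.cons_val_zero, Matrix.cons_val_one, Matrix.cons_val_two, Matrix.head_cons,
    Matrix.tail_cons, boost_X₁, boost_X₂, boost_X₃, lcSL_self_X₁, lcSL_self_X₂₃]
  ext i; fin_cases i <;> simp; ring

theorem bitensionSL_boost (hd : ∀ i, d i ≠ 0) (a x y z : ℝ) :
    bitensionSL d (boost a ∘ diagFrame x y z) =
      ((d 1 + d 2) * (y ^ 2 + z ^ 2) * (Real.cosh a ^ 2 + Real.sinh a ^ 2) / d 0) •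
        tensionSL d (boost a ∘ diagFrame x y z) := by
  rw [bitensionSL, tensionSL_boost]
  simp only [Fin.sum_univ_three, Function.comp_apply, diagFrame,
    Matrix.cons_val_zero, Matrix.cons_val_one, Matrix.cons_val_two, Matrix.head_cons,
    Matrix.tail_cons, boost_X₁, boost_X₂, boost_X₃, bitensionTermSL_X₁,
    bitensionTermSL_X₂₃ d hd]
  ext i; fin_cases i <;> simp; ring

end

theorem sl2_boost_biharmonic_iff_harmonic_general
    (l1 μ1 ν1 l2 μ2 ν2 : ℝ)
    (hμ1 : 0 < μ1)
    (hl2 : 0 < l2) (hμ2 : 0 < μ2) (hν2 : 0 < ν2)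
    (a : ℝ)
    (ξ : (Fin 3 → ℝ) → (Fin 3 → ℝ))
    (hξ : ξ = fun u => ![u 0, Real.cosh a * u 1 + Real.sinh a * u 2,
      Real.sinh a * u 1 + Real.cosh a * u 2])
    (B : (Fin 3 → ℝ) → (Fin 3 → ℝ) → (Fin 3 → ℝ))
    -- B is the Levi-Civita product of the target metric diag(λ₂,μ₂,ν₂)
    (hB : ∀ u v w, 2 * ip ![l2, μ2, ν2] (B u v) w =
      ip ![l2, μ2, ν2] (brSL u v) w + ip ![l2, μ2, ν2] (brSL w u) v
        + ip ![l2, μ2, ν2] (brSL w v) u)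
    -- K is the curvature of the target: K(u,v)w = B_u B_v w − B_v B_u w − B_{[u,v]} w
    (K : (Fin 3 → ℝ) → (Fin 3 → ℝ) → (Fin 3 → ℝ) → (Fin 3 → ℝ))
    (hK : ∀ u v w, K u v w = B u (B v w) - B v (B u w) - B (brSL u v) w)
    (τ τ₂ : Fin 3 → ℝ)
    -- τ(ξ) = Σ_i B_{ξ(e_i)} ξ(e_i) for the orthonormal basis e of diag(λ₁,μ₁,ν₁)
    (hτ : τ = B (ξ ![Real.sqrt (1/l1), 0, 0]) (ξ ![Real.sqrt (1/l1), 0, 0])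
            + B (ξ ![0, Real.sqrt (1/μ1), 0]) (ξ ![0, Real.sqrt (1/μ1), 0])
            + B (ξ ![0, 0, Real.sqrt (1/ν1)]) (ξ ![0, 0, Real.sqrt (1/ν1)]))
    -- τ₂(ξ) = −Σ_i (B_{ξ(e_i)} B_{ξ(e_i)} τ(ξ) + K(τ(ξ),ξ(e_i))ξ(e_i))
    (hτ₂ : τ₂ = -(B (ξ ![Real.sqrt (1/l1), 0, 0]) (B (ξ ![Real.sqrt (1/l1), 0, 0]) τ)
        + K τ (ξ ![Real.sqrt (1/l1), 0, 0]) (ξ ![Real.sqrt (1/l1), 0, 0])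
      + B (ξ ![0, Real.sqrt (1/μ1), 0]) (B (ξ ![0, Real.sqrt (1/μ1), 0]) τ)
        + K τ (ξ ![0, Real.sqrt (1/μ1), 0]) (ξ ![0, Real.sqrt (1/μ1), 0])
      + B (ξ ![0, 0, Real.sqrt (1/ν1)]) (B (ξ ![0, 0, Real.sqrt (1/ν1)]) τ)
        + K τ (ξ ![0, 0, Real.sqrt (1/ν1)]) (ξ ![0, 0, Real.sqrt (1/ν1)]))) :
    (τ₂ = 0 ↔ τ = 0) ∧ (τ = 0 ↔ a = 0) := by
  have hd : ∀ i, ![l2, μ2, ν2] i ≠ 0 := by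
    intro i; fin_cases i <;> simp [hl2.ne', hμ2.ne', hν2.ne']
  obtain rfl := eq_lcSL_of_koszul hd hB
  obtain rfl : K = curvSL ![l2, μ2, ν2] := by funext u v w; exact hK u v w
  obtain rfl : ξ = boost a := hξ
  set f := boost a ∘ diagFrame (Real.sqrt (1 / l1)) (Real.sqrt (1 / μ1)) (Real.sqrt (1 / ν1))
  obtain rfl : τ = tensionSL ![l2, μ2, ν2] f := by
    rw [hτ]; simp [tensionSL, Fin.sum_univ_three, f, diagFrame]
  obtain rfl : τ₂ = bitensionSL ![l2, μ2, ν2] f := by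
    rw [hτ₂]
    simp only [bitensionSL, bitensionTermSL, Fin.sum_univ_three, f, Function.comp_apply,
      diagFrame, Matrix.cons_val_zero, Matrix.cons_val_one, Matrix.cons_val_two,
      Matrix.head_cons, Matrix.tail_cons]
    abel
  rw [bitensionSL_boost _ hd, tensionSL_boost]
  simp only [Matrix.cons_val_zero, Matrix.cons_val_one, Matrix.cons_val_two, Matrix.head_cons,
    Matrix.tail_cons]
  constructor
  · rw [smul_eq_zero, or_iff_right (by positivity)]
  · rw [show ∀ t : ℝ, ![t, 0, 0] = 0 ↔ t = 0 by simp, mul_eq_zero,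
      or_iff_right (neg_ne_zero.mpr (by positivity)), Real.sinh_eq_zero]

/-- For `sl(2,ℝ)` with metrics `diag(λ₁,μ₁,ν₁)`, `diag(λ₂,μ₂,ν₂)`, the boost `ξ₁(a)` is
biharmonic iff it is harmonic, i.e. iff `a = 0`. -/
theorem sl2_boost_biharmonic_iff_harmonic
    (l1 μ1 ν1 l2 μ2 ν2 : ℝ)
    (hl1 : 0 < l1) (hμ1 : 0 < μ1) (hν1 : 0 < ν1)
    (hl2 : 0 < l2) (hμ2 : 0 < μ2) (hν2 : 0 < ν2)
    (a : ℝ)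
    (ξ : (Fin 3 → ℝ) → (Fin 3 → ℝ))
    (hξ : ξ = fun u => ![u 0, Real.cosh a * u 1 + Real.sinh a * u 2,
      Real.sinh a * u 1 + Real.cosh a * u 2])
    (B : (Fin 3 → ℝ) → (Fin 3 → ℝ) → (Fin 3 → ℝ))
    -- B is the Levi-Civita product of the target metric diag(λ₂,μ₂,ν₂)
    (hB : ∀ u v w, 2 * ip ![l2, μ2, ν2] (B u v) w =
      ip ![l2, μ2, ν2] (brSL u v) w + ip ![l2, μ2, ν2] (brSL w u) v
        + ip ![l2, μ2, ν2] (brSL w v) u)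
    -- K is the curvature of the target: K(u,v)w = B_u B_v w − B_v B_u w − B_{[u,v]} w
    (K : (Fin 3 → ℝ) → (Fin 3 → ℝ) → (Fin 3 → ℝ) → (Fin 3 → ℝ))
    (hK : ∀ u v w, K u v w = B u (B v w) - B v (B u w) - B (brSL u v) w)
    (τ τ₂ : Fin 3 → ℝ)
    -- τ(ξ) = Σ_i B_{ξ(e_i)} ξ(e_i) for the orthonormal basis e of diag(λ₁,μ₁,ν₁)
    (hτ : τ = B (ξ ![Real.sqrt (1/l1), 0, 0]) (ξ ![Real.sqrt (1/l1), 0, 0])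
            + B (ξ ![0, Real.sqrt (1/μ1), 0]) (ξ ![0, Real.sqrt (1/μ1), 0])
            + B (ξ ![0, 0, Real.sqrt (1/ν1)]) (ξ ![0, 0, Real.sqrt (1/ν1)]))
    -- τ₂(ξ) = −Σ_i (B_{ξ(e_i)} B_{ξ(e_i)} τ(ξ) + K(τ(ξ),ξ(e_i))ξ(e_i))
    (hτ₂ : τ₂ = -(B (ξ ![Real.sqrt (1/l1), 0, 0]) (B (ξ ![Real.sqrt (1/l1), 0, 0]) τ)
        + K τ (ξ ![Real.sqrt (1/l1), 0, 0]) (ξ ![Real.sqrt (1/l1), 0, 0])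
      + B (ξ ![0, Real.sqrt (1/μ1), 0]) (B (ξ ![0, Real.sqrt (1/μ1), 0]) τ)
        + K τ (ξ ![0, Real.sqrt (1/μ1), 0]) (ξ ![0, Real.sqrt (1/μ1), 0])
      + B (ξ ![0, 0, Real.sqrt (1/ν1)]) (B (ξ ![0, 0, Real.sqrt (1/ν1)]) τ)
        + K τ (ξ ![0, 0, Real.sqrt (1/ν1)]) (ξ ![0, 0, Real.sqrt (1/ν1)]))) :
    (τ₂ = 0 ↔ τ = 0) ∧ (τ = 0 ↔ a = 0) :=
  sl2_boost_biharmonic_iff_harmonic_general l1 μ1 ν1 l2 μ2 ν2 hμ1 hl2 hμ2 hν2 a ξ hξ B hB K hK τ τ₂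
    hτ hτ₂
end
end

section
/- Let ξ: (g,⟨,⟩₁) → (h,⟨,⟩₂) be a homomorphism of metric Lie algebras with g unimodular, and for a basis (f₁,...,f_m) of h define the test matrix M with entries m_{ij} = tr(ξ*∘(ad_{f_i}+ad*_{f_i})∘ad_{f_j}∘ξ) − tr(ξ*∘ad_{[f_i,f_j]}∘ξ). If det(M) ≠ 0, then τ₂(ξ) = 0 implies τ(ξ) = 0 (so ξ is biharmonic iff harmonic). -/
open RealInnerProductSpace

/-! The right-hand side of the identity for `⟨τ₂(ξ), u⟩` is a bilinear form in `(u, τ(ξ))`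
whose Gram matrix in the basis `(fᵢ)` is the test matrix `M`. So `τ₂(ξ) = 0` puts `τ(ξ)` in the
right radical of a bilinear form with invertible Gram matrix, which is zero. -/

namespace MetricLieAlgebra

variable {g h : Type*} [NormedAddCommGroup g] [InnerProductSpace ℝ g] [FiniteDimensional ℝ g]
  [NormedAddCommGroup h] [InnerProductSpace ℝ h] [FiniteDimensional ℝ h]

noncomputable def testForm (Lh : h →ₗ[ℝ] h →ₗ[ℝ] h) (ξ : g →ₗ[ℝ] h) :
    LinearMap.BilinForm ℝ h :=
  LinearMap.mk₂ ℝ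
    (fun u v => LinearMap.trace ℝ g
        (LinearMap.adjoint ξ ∘ₗ (Lh u + LinearMap.adjoint (Lh u)) ∘ₗ Lh v ∘ₗ ξ) -
      LinearMap.trace ℝ g (LinearMap.adjoint ξ ∘ₗ Lh (Lh u v) ∘ₗ ξ))
    (fun u₁ u₂ v => by
      simp only [map_add, LinearMap.add_apply, LinearMap.add_comp, LinearMap.comp_add]; ring)
    (fun r u v => by
      simp only [map_smul, LinearMap.smul_apply, LinearMap.smul_comp, LinearMap.comp_smul,
        ← smul_add, smul_eq_mul]; ring)
    (fun u v₁ v₂ => by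
      simp only [map_add, LinearMap.add_comp, LinearMap.comp_add]; ring)
    (fun r u v => by
      simp only [map_smul, LinearMap.smul_comp, LinearMap.comp_smul, smul_eq_mul]; ring)

@[simp]
theorem testForm_apply (Lh : h →ₗ[ℝ] h →ₗ[ℝ] h) (ξ : g →ₗ[ℝ] h) (u v : h) :
    testForm Lh ξ u v = LinearMap.trace ℝ g
        (LinearMap.adjoint ξ ∘ₗ (Lh u + LinearMap.adjoint (Lh u)) ∘ₗ Lh v ∘ₗ ξ) -
      LinearMap.trace ℝ g (LinearMap.adjoint ξ ∘ₗ Lh (Lh u v) ∘ₗ ξ) :=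
  rfl

end MetricLieAlgebra

theorem test_matrix_det_ne_zero_biharmonic_iff_harmonic_general
    {g h : Type*} [NormedAddCommGroup g] [InnerProductSpace ℝ g] [FiniteDimensional ℝ g]
    [NormedAddCommGroup h] [InnerProductSpace ℝ h] [FiniteDimensional ℝ h]
    (Lh : h →ₗ[ℝ] h →ₗ[ℝ] h)
    (ξ : g →ₗ[ℝ] h)
    (τ τ₂ : h)
    -- the identity ⟨τ₂(ξ),u⟩ = tr(ξ* ∘ (ad_u + ad_u*) ∘ ad_{τ(ξ)} ∘ ξ) − tr(ξ* ∘ ad_{[u,τ(ξ)]} ∘ ξ)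
    (hτ₂ : ∀ u : h, ⟪τ₂, u⟫ =
      LinearMap.trace ℝ g
        (LinearMap.adjoint ξ ∘ₗ (Lh u + LinearMap.adjoint (Lh u)) ∘ₗ Lh τ ∘ₗ ξ) -
      LinearMap.trace ℝ g (LinearMap.adjoint ξ ∘ₗ Lh (Lh u τ) ∘ₗ ξ))
    {m : ℕ} (f : Module.Basis (Fin m) ℝ h)
    (M : Matrix (Fin m) (Fin m) ℝ)
    (hM : ∀ i j, M i j =
      LinearMap.trace ℝ g
        (LinearMap.adjoint ξ ∘ₗ (Lh (f i) + LinearMap.adjoint (Lh (f i))) ∘ₗ Lh (f j) ∘ₗ ξ) -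
      LinearMap.trace ℝ g (LinearMap.adjoint ξ ∘ₗ Lh (Lh (f i) (f j)) ∘ₗ ξ))
    (hdet : M.det ≠ 0) :
    τ₂ = 0 → τ = 0 := by
  intro hτ₂_zero
  have hM_eq : LinearMap.toMatrix₂ f f (MetricLieAlgebra.testForm Lh ξ) = M := by
    ext i j
    rw [LinearMap.toMatrix₂_apply, hM, MetricLieAlgebra.testForm_apply]
  have hτ_orth : ∀ u, MetricLieAlgebra.testForm Lh ξ u τ = 0 := fun u => by
    rw [MetricLieAlgebra.testForm_apply, ← hτ₂, hτ₂_zero, inner_zero_left]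
  exact LinearMap.separatingRight_of_det_ne_zero f (hM_eq ▸ hdet) τ hτ_orth

/-- If the test matrix `M` of a homomorphism `ξ` of metric Lie algebras (with unimodular
source) has nonzero determinant, then `τ₂(ξ) = 0` implies `τ(ξ) = 0`. -/
theorem test_matrix_det_ne_zero_biharmonic_iff_harmonic
    {g h : Type*} [NormedAddCommGroup g] [InnerProductSpace ℝ g] [FiniteDimensional ℝ g]
    [NormedAddCommGroup h] [InnerProductSpace ℝ h] [FiniteDimensional ℝ h]
    (Lg : g →ₗ[ℝ] g →ₗ[ℝ] g) (Lh : h →ₗ[ℝ] h →ₗ[ℝ] h)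
    (hLg_alt : ∀ u, Lg u u = 0)
    (hLg_jacobi : ∀ u v w, Lg u (Lg v w) + Lg v (Lg w u) + Lg w (Lg u v) = 0)
    (hLh_alt : ∀ u, Lh u u = 0)
    (hLh_jacobi : ∀ u v w, Lh u (Lh v w) + Lh v (Lh w u) + Lh w (Lh u v) = 0)
    (hg_unimodular : ∀ v, LinearMap.trace ℝ g (Lg v) = 0)
    (ξ : g →ₗ[ℝ] h)
    (hξ : ∀ u v, ξ (Lg u v) = Lh (ξ u) (ξ v))
    (τ τ₂ : h)
    -- the identity ⟨τ(ξ),u⟩ = tr(ξ* ∘ ad_u ∘ ξ)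
    (hτ : ∀ u : h, ⟪τ, u⟫ = LinearMap.trace ℝ g (LinearMap.adjoint ξ ∘ₗ Lh u ∘ₗ ξ))
    -- the identity ⟨τ₂(ξ),u⟩ = tr(ξ* ∘ (ad_u + ad_u*) ∘ ad_{τ(ξ)} ∘ ξ) − tr(ξ* ∘ ad_{[u,τ(ξ)]} ∘ ξ)
    (hτ₂ : ∀ u : h, ⟪τ₂, u⟫ =
      LinearMap.trace ℝ g
        (LinearMap.adjoint ξ ∘ₗ (Lh u + LinearMap.adjoint (Lh u)) ∘ₗ Lh τ ∘ₗ ξ) -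
      LinearMap.trace ℝ g (LinearMap.adjoint ξ ∘ₗ Lh (Lh u τ) ∘ₗ ξ))
    {m : ℕ} (f : Module.Basis (Fin m) ℝ h)
    (M : Matrix (Fin m) (Fin m) ℝ)
    (hM : ∀ i j, M i j =
      LinearMap.trace ℝ g
        (LinearMap.adjoint ξ ∘ₗ (Lh (f i) + LinearMap.adjoint (Lh (f i))) ∘ₗ Lh (f j) ∘ₗ ξ) -
      LinearMap.trace ℝ g (LinearMap.adjoint ξ ∘ₗ Lh (Lh (f i) (f j)) ∘ₗ ξ))
    (hdet : M.det ≠ 0) :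
    τ₂ = 0 → τ = 0 :=
  test_matrix_det_ne_zero_biharmonic_iff_harmonic_general Lh ξ τ τ₂ hτ₂ f M hM hdet
end
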